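/- arXiv:1301.3102 — 5 statements merged into one kernel-verified Lean document; each statement's English description precedes it below -/
import Mathlib

section
/- There exist α₀ > 0 and C > 0 such that for every α ∈ (0, α₀), with x₊(α) < 0 < x₋(α) denoting the two zeros of x ↦ Im g(x, α) in (−δ, δ) given by the splitting lemma: (i) α^{3/2}/C ≤ −Im ∫_{x₊(α)}^{x₋(α)} g(y, α) dy ≤ C·α^{3/2} (i.e. the action ℓ₀(α) := −Im ∫_{x₊(α)}^{x₋(α)} g(y,α) dy satisfies ℓ₀(α) ≍ α^{3/2}); (ii) √α/C ≤ −Im ∂ₓg(x₊(α), α) ≤ C·√α; and (iii) √α/C ≤ Im ∂ₓg(x₋(α), α) ≤ C·√α. -/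
open Complex Set

private lemma mvt_pos {v v' : ℝ → ℝ} (hv : ∀ t, HasDerivAt v (v' t) t) {a b : ℝ} (hab : a < b) :
    ∃ θ ∈ Set.Ioo a b, v b - v a = (b - a) * v' θ := by
  obtain ⟨c, hc, hc'⟩ := exists_hasDerivAt_eq_slope v v' hab
    (fun t _ => (hv t).continuousAt.continuousWithinAt) (fun t _ => hv t)
  refine ⟨c, hc, ?_⟩
  rw [hc']
  field_simp [sub_ne_zero.2 hab.ne']

private lemma nonneg_right {v v' : ℝ → ℝ} (hv : ∀ t, HasDerivAt v (v' t) t)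
    (h0 : v 0 = 0) {x : ℝ} (hx : 0 ≤ x) (hd : ∀ t ∈ Set.Ioo (0:ℝ) x, 0 ≤ v' t) :
    0 ≤ v x := by
  rcases eq_or_lt_of_le hx with h | h
  · rw [← h, h0]
  · have hm := monotoneOn_of_deriv_nonneg (convex_Icc 0 x)
      (fun t _ => (hv t).continuousAt.continuousWithinAt)
      (fun t _ => (hv t).differentiableAt.differentiableWithinAt)
      (fun t ht => by
        rw [interior_Icc] at ht
        rw [(hv t).deriv]; exact hd t ht)
    have := hm (left_mem_Icc.2 hx) (right_mem_Icc.2 hx) hx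
    rwa [h0] at this

private lemma nonneg_left {v v' : ℝ → ℝ} (hv : ∀ t, HasDerivAt v (v' t) t)
    (h0 : v 0 = 0) {x : ℝ} (hx : x ≤ 0) (hd : ∀ t ∈ Set.Ioo x (0:ℝ), v' t ≤ 0) :
    0 ≤ v x := by
  rcases eq_or_lt_of_le hx with h | h
  · rw [h, h0]
  · have hm := antitoneOn_of_deriv_nonpos (convex_Icc x 0)
      (fun t _ => (hv t).continuousAt.continuousWithinAt)
      (fun t _ => (hv t).differentiableAt.differentiableWithinAt)
      (fun t ht => by
        rw [interior_Icc] at ht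
        rw [(hv t).deriv]; exact hd t ht)
    have := hm (left_mem_Icc.2 hx) (right_mem_Icc.2 hx) hx
    rwa [h0] at this

noncomputable def Fim (g : ℝ → ℝ → ℂ) : ℝ × ℝ → ℝ := fun p => (g p.1 p.2).im
noncomputable def P1 (g : ℝ → ℝ → ℂ) : ℝ × ℝ → ℝ := fun p => fderiv ℝ (Fim g) p (1, 0)
noncomputable def P2 (g : ℝ → ℝ → ℂ) : ℝ × ℝ → ℝ := fun p => fderiv ℝ (Fim g) p (0, 1)
noncomputable def P11 (g : ℝ → ℝ → ℂ) : ℝ × ℝ → ℝ := fun p => fderiv ℝ (P1 g) p (1, 0)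
noncomputable def P12 (g : ℝ → ℝ → ℂ) : ℝ × ℝ → ℝ := fun p => fderiv ℝ (P1 g) p (0, 1)
noncomputable def Wc (g : ℝ → ℝ → ℂ) : ℝ × ℝ → ℂ :=
  fun p => fderiv ℝ (fun q : ℝ × ℝ => g q.1 q.2) p (1, 0)

section Aux

variable {g : ℝ → ℝ → ℂ}

lemma contFim (hg : ContDiff ℝ (⊤ : ℕ∞) (fun p : ℝ × ℝ => g p.1 p.2)) : ContDiff ℝ (⊤ : ℕ∞) (Fim g) :=
  Complex.imCLM.contDiff.comp hg

lemma contP1 (hg : ContDiff ℝ (⊤ : ℕ∞) (fun p : ℝ × ℝ => g p.1 p.2)) : ContDiff ℝ (⊤ : ℕ∞) (P1 g) :=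
  ((contFim hg).fderiv_right (by simp)).clm_apply contDiff_const

lemma contP2 (hg : ContDiff ℝ (⊤ : ℕ∞) (fun p : ℝ × ℝ => g p.1 p.2)) : Continuous (P2 g) := by
  have h : ContDiff ℝ (⊤ : ℕ∞) (P2 g) := ((contFim hg).fderiv_right (by simp)).clm_apply contDiff_const
  exact h.continuous

lemma contP11 (hg : ContDiff ℝ (⊤ : ℕ∞) (fun p : ℝ × ℝ => g p.1 p.2)) : Continuous (P11 g) := by
  have h : ContDiff ℝ (⊤ : ℕ∞) (P11 g) := ((contP1 hg).fderiv_right (by simp)).clm_apply contDiff_const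
  exact h.continuous

lemma contP12 (hg : ContDiff ℝ (⊤ : ℕ∞) (fun p : ℝ × ℝ => g p.1 p.2)) : Continuous (P12 g) := by
  have h : ContDiff ℝ (⊤ : ℕ∞) (P12 g) := ((contP1 hg).fderiv_right (by simp)).clm_apply contDiff_const
  exact h.continuous

lemma contWc (hg : ContDiff ℝ (⊤ : ℕ∞) (fun p : ℝ × ℝ => g p.1 p.2)) : ContDiff ℝ (⊤ : ℕ∞) (Wc g) :=
  (hg.fderiv_right (by simp)).clm_apply contDiff_const

lemma line_x (x α : ℝ) : HasDerivAt (fun t : ℝ => (t, α)) ((1:ℝ), (0:ℝ)) x :=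
  HasDerivAt.prodMk (hasDerivAt_id x) (hasDerivAt_const x α)

lemma line_a (x α : ℝ) : HasDerivAt (fun t : ℝ => (x, t)) ((0:ℝ), (1:ℝ)) α :=
  HasDerivAt.prodMk (hasDerivAt_const α x) (hasDerivAt_id α)

lemma hasDeriv_x (hg : ContDiff ℝ (⊤ : ℕ∞) (fun p : ℝ × ℝ => g p.1 p.2)) (x α : ℝ) : HasDerivAt (fun t => Fim g (t, α)) (P1 g (x, α)) x :=
  ((contFim hg).differentiable (by simp) (x, α)).hasFDerivAt.comp_hasDerivAt (f := fun t : ℝ => (t, α)) x (line_x x α)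

lemma hasDeriv_a (hg : ContDiff ℝ (⊤ : ℕ∞) (fun p : ℝ × ℝ => g p.1 p.2)) (x α : ℝ) : HasDerivAt (fun t => Fim g (x, t)) (P2 g (x, α)) α :=
  ((contFim hg).differentiable (by simp) (x, α)).hasFDerivAt.comp_hasDerivAt α (line_a x α)

lemma hasDeriv_P1x (hg : ContDiff ℝ (⊤ : ℕ∞) (fun p : ℝ × ℝ => g p.1 p.2)) (x α : ℝ) : HasDerivAt (fun t => P1 g (t, α)) (P11 g (x, α)) x :=
  ((contP1 hg).differentiable (by simp) (x, α)).hasFDerivAt.comp_hasDerivAt (f := fun t : ℝ => (t, α)) x (line_x x α)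

lemma hasDeriv_P1a (hg : ContDiff ℝ (⊤ : ℕ∞) (fun p : ℝ × ℝ => g p.1 p.2)) (x α : ℝ) : HasDerivAt (fun t => P1 g (x, t)) (P12 g (x, α)) α :=
  ((contP1 hg).differentiable (by simp) (x, α)).hasFDerivAt.comp_hasDerivAt α (line_a x α)

lemma hasDeriv_gx (hg : ContDiff ℝ (⊤ : ℕ∞) (fun p : ℝ × ℝ => g p.1 p.2)) (x α : ℝ) : HasDerivAt (fun t => g t α) (Wc g (x, α)) x :=
  (hg.differentiable (by simp) (x, α)).hasFDerivAt.comp_hasDerivAt (f := fun t : ℝ => (t, α)) x (line_x x α)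

lemma hasDeriv_ga (hg : ContDiff ℝ (⊤ : ℕ∞) (fun p : ℝ × ℝ => g p.1 p.2)) (x α : ℝ) :
    HasDerivAt (fun t => g x t) (fderiv ℝ (fun q : ℝ × ℝ => g q.1 q.2) (x, α) (0, 1)) α :=
  (hg.differentiable (by simp) (x, α)).hasFDerivAt.comp_hasDerivAt α (line_a x α)

lemma fderivFim (hg : ContDiff ℝ (⊤ : ℕ∞) (fun p : ℝ × ℝ => g p.1 p.2)) (p : ℝ × ℝ) :
    fderiv ℝ (Fim g) p =
      Complex.imCLM.comp (fderiv ℝ (fun q : ℝ × ℝ => g q.1 q.2) p) :=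
  (Complex.imCLM.hasFDerivAt.comp p (hg.differentiable (by simp) p).hasFDerivAt).fderiv

lemma P1_eq_im (hg : ContDiff ℝ (⊤ : ℕ∞) (fun p : ℝ × ℝ => g p.1 p.2)) (p : ℝ × ℝ) : P1 g p = (Wc g p).im := by
  rw [P1, fderivFim hg]; rfl

lemma P2_eq_im (hg : ContDiff ℝ (⊤ : ℕ∞) (fun p : ℝ × ℝ => g p.1 p.2)) (p : ℝ × ℝ) :
    P2 g p = (fderiv ℝ (fun q : ℝ × ℝ => g q.1 q.2) p (0, 1)).im := by
  rw [P2, fderivFim hg]; rfl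

lemma P1_eq_deriv (hg : ContDiff ℝ (⊤ : ℕ∞) (fun p : ℝ × ℝ => g p.1 p.2)) (x α : ℝ) : P1 g (x, α) = (deriv (fun t => g t α) x).im := by
  rw [P1_eq_im hg, (hasDeriv_gx hg x α).deriv]

end Aux

section Aux2
variable {g : ℝ → ℝ → ℂ}

lemma P11_eq (hg : ContDiff ℝ (⊤ : ℕ∞) (fun p : ℝ × ℝ => g p.1 p.2)) (p : ℝ × ℝ) :
    P11 g p = (fderiv ℝ (Wc g) p (1, 0)).im := by
  have hfun : P1 g = fun q => Complex.imCLM (Wc g q) := funext fun q => P1_eq_im hg q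
  have hd : HasFDerivAt (fun q => Complex.imCLM (Wc g q))
      (Complex.imCLM.comp (fderiv ℝ (Wc g) p)) p :=
    Complex.imCLM.hasFDerivAt.comp p ((contWc hg).differentiable (by simp) p).hasFDerivAt
  rw [P11, hfun, hd.fderiv]
  rfl

lemma derivderiv_eq (hg : ContDiff ℝ (⊤ : ℕ∞) (fun p : ℝ × ℝ => g p.1 p.2)) :
    deriv (deriv (fun x : ℝ => g x 0)) 0 = fderiv ℝ (Wc g) (0, 0) (1, 0) := by
  have h1 : deriv (fun x : ℝ => g x 0) = fun x => Wc g (x, 0) :=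
    funext fun x => (hasDeriv_gx hg x 0).deriv
  rw [h1]
  have hW : HasFDerivAt (Wc g) (fderiv ℝ (Wc g) (0, 0)) ((fun t : ℝ => (t, 0)) 0) :=
    ((contWc hg).differentiable (by simp) _).hasFDerivAt
  have h2 : HasDerivAt (fun x : ℝ => Wc g (x, 0)) (fderiv ℝ (Wc g) (0, 0) (1, 0)) 0 :=
    hW.comp_hasDerivAt (f := fun t : ℝ => (t, 0)) 0 (line_x 0 0)
  exact h2.deriv

lemma P11_00_pos (hg : ContDiff ℝ (⊤ : ℕ∞) (fun p : ℝ × ℝ => g p.1 p.2))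
    (hgxx : 0 < (deriv (deriv (fun x : ℝ => g x 0)) 0).im) : 0 < P11 g (0, 0) := by
  rw [P11_eq hg, ← derivderiv_eq hg]; exact hgxx

lemma P1_00 (hg : ContDiff ℝ (⊤ : ℕ∞) (fun p : ℝ × ℝ => g p.1 p.2))
    (hgx : deriv (fun x : ℝ => g x 0) 0 = 0) : P1 g (0, 0) = 0 := by
  rw [P1_eq_deriv hg 0 0]
  rw [show (fun t => g t 0) = (fun x : ℝ => g x 0) from rfl, hgx]
  simp

lemma P2_00 (hg : ContDiff ℝ (⊤ : ℕ∞) (fun p : ℝ × ℝ => g p.1 p.2))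
    (hga : deriv (fun a : ℝ => g 0 a) 0 = -Complex.I) : P2 g (0, 0) = -1 := by
  rw [P2_eq_im hg, ← (hasDeriv_ga hg 0 0).deriv]
  rw [show (fun t => g 0 t) = (fun a : ℝ => g 0 a) from rfl, hga]
  simp

end Aux2

section Aux3
variable {g : ℝ → ℝ → ℂ}

lemma P1_linear (hg : ContDiff ℝ (⊤ : ℕ∞) (fun p : ℝ × ℝ => g p.1 p.2))
    (hgx0 : P1 g (0, 0) = 0) {c₀ r : ℝ}
    (hP11 : ∀ t ∈ Icc (-r) r, c₀ ≤ P11 g (t, 0) ∧ P11 g (t, 0) ≤ 3 * c₀)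
    {x : ℝ} (hx : x ∈ Icc (-r) r) :
    (0 ≤ x → c₀ * x ≤ P1 g (x, 0) ∧ P1 g (x, 0) ≤ 3 * c₀ * x) ∧
    (x ≤ 0 → 3 * c₀ * x ≤ P1 g (x, 0) ∧ P1 g (x, 0) ≤ c₀ * x) := by
  constructor
  · intro hx0
    rcases eq_or_lt_of_le hx0 with h | h
    · simp [← h, show P1 g 0 = (0:ℝ) from hgx0, hgx0]
    · obtain ⟨θ, hθ, heq⟩ := mvt_pos (v := fun t => P1 g (t, 0))
        (v' := fun t => P11 g (t, 0)) (fun t => hasDeriv_P1x hg t 0) h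
      have hθm : θ ∈ Icc (-r) r := ⟨by linarith [hθ.1, hθ.2, hx.1, hx.2], by linarith [hθ.1, hθ.2, hx.1, hx.2]⟩
      obtain ⟨hl, hr2⟩ := hP11 θ hθm
      rw [hgx0] at heq
      constructor <;> nlinarith
  · intro hx0
    rcases eq_or_lt_of_le hx0 with h | h
    · simp [h, show P1 g 0 = (0:ℝ) from hgx0, hgx0]
    · obtain ⟨θ, hθ, heq⟩ := mvt_pos (v := fun t => P1 g (t, 0))
        (v' := fun t => P11 g (t, 0)) (fun t => hasDeriv_P1x hg t 0) h
      have hθm : θ ∈ Icc (-r) r := ⟨by linarith [hθ.1, hθ.2, hx.1, hx.2], by linarith [hθ.1, hθ.2, hx.1, hx.2]⟩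
      obtain ⟨hl, hr2⟩ := hP11 θ hθm
      rw [hgx0] at heq
      constructor <;> nlinarith

lemma quad_bounds (hg : ContDiff ℝ (⊤ : ℕ∞) (fun p : ℝ × ℝ => g p.1 p.2))
    (h00 : (g 0 0).im = 0) (hgx0 : P1 g (0, 0) = 0) {c₀ r : ℝ} (hc : 0 < c₀)
    (hP11 : ∀ t ∈ Icc (-r) r, c₀ ≤ P11 g (t, 0) ∧ P11 g (t, 0) ≤ 3 * c₀)
    {x : ℝ} (hx : x ∈ Icc (-r) r) :
    c₀ / 2 * x ^ 2 ≤ (g x 0).im ∧ (g x 0).im ≤ 3 * c₀ / 2 * x ^ 2 := by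
  have hgim : ∀ t : ℝ, HasDerivAt (fun t => (g t 0).im) (P1 g (t, 0)) t :=
    fun t => hasDeriv_x hg t 0
  have hsq : ∀ (a : ℝ) (t : ℝ), HasDerivAt (fun t : ℝ => a * t ^ 2) (2 * a * t) t := by
    intro a t
    have h := HasDerivAt.const_mul a (hasDerivAt_pow 2 t)
    exact h.congr_deriv (by norm_num; ring)
  have hmem : ∀ t : ℝ, min x 0 < t → t < max x 0 → t ∈ Icc (-r) r := by
    intro t h1 h2
    rcases le_total x 0 with h | h
    · simp [min_eq_left h, max_eq_right h] at h1 h2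
      exact ⟨by linarith [hx.1, hx.2], by linarith [hx.1, hx.2]⟩
    · simp [min_eq_right h, max_eq_left h] at h1 h2
      exact ⟨by linarith [hx.1, hx.2], by linarith [hx.1, hx.2]⟩
  rcases le_total 0 x with hx0 | hx0
  · constructor
    · have h1 : ∀ t, HasDerivAt (fun t => (g t 0).im - c₀ / 2 * t ^ 2)
          (P1 g (t, 0) - 2 * (c₀ / 2) * t) t := fun t => (hgim t).sub (hsq (c₀ / 2) t)
      have := nonneg_right h1 (by simp [h00]) hx0 (fun t ht => by
        have hb := ((P1_linear hg hgx0 hP11 (hmem t (by simpa [hx0] using ht.1)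
          (by simpa [hx0, max_eq_left hx0] using ht.2))).1 ht.1.le).1
        nlinarith [ht.1])
      linarith [this]
    · have h1 : ∀ t, HasDerivAt (fun t => 3 * c₀ / 2 * t ^ 2 - (g t 0).im)
          (2 * (3 * c₀ / 2) * t - P1 g (t, 0)) t := fun t => (hsq (3 * c₀ / 2) t).sub (hgim t)
      have := nonneg_right h1 (by simp [h00]) hx0 (fun t ht => by
        have hb := ((P1_linear hg hgx0 hP11 (hmem t (by simpa [hx0] using ht.1)
          (by simpa [hx0, max_eq_left hx0] using ht.2))).1 ht.1.le).2
        nlinarith [ht.1])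
      linarith [this]
  · constructor
    · have h1 : ∀ t, HasDerivAt (fun t => (g t 0).im - c₀ / 2 * t ^ 2)
          (P1 g (t, 0) - 2 * (c₀ / 2) * t) t := fun t => (hgim t).sub (hsq (c₀ / 2) t)
      have := nonneg_left h1 (by simp [h00]) hx0 (fun t ht => by
        have hb := ((P1_linear hg hgx0 hP11 (hmem t (by simpa [min_eq_left hx0] using ht.1)
          (by simpa [hx0] using ht.2))).2 ht.2.le).2
        nlinarith [ht.2])
      linarith [this]
    · have h1 : ∀ t, HasDerivAt (fun t => 3 * c₀ / 2 * t ^ 2 - (g t 0).im)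
          (2 * (3 * c₀ / 2) * t - P1 g (t, 0)) t := fun t => (hsq (3 * c₀ / 2) t).sub (hgim t)
      have := nonneg_left h1 (by simp [h00]) hx0 (fun t ht => by
        have hb := ((P1_linear hg hgx0 hP11 (hmem t (by simpa [min_eq_left hx0] using ht.1)
          (by simpa [hx0] using ht.2))).2 ht.2.le).1
        nlinarith [ht.2])
      linarith [this]

lemma im_integral {a b w : ℝ} (hcont : Continuous fun y => g y w) :
    (∫ y in a..b, g y w).im = ∫ y in a..b, (g y w).im := by
  have h := Complex.imCLM.intervalIntegral_comp_comm
    (hcont.intervalIntegrable (μ := MeasureTheory.volume) a b)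
  simpa using h.symm

end Aux3

private lemma div_le_half_mul {u t C : ℝ} (hu : 0 ≤ u) (ht : 0 < t) (hC : 2 / t ≤ C) :
    u / C ≤ t / 2 * u := by
  have hCpos : 0 < C := lt_of_lt_of_le (by positivity) hC
  have h1 : 1 / C ≤ 1 / (2 / t) := one_div_le_one_div_of_le (by positivity) hC
  rw [one_div_div] at h1
  calc u / C = u * (1 / C) := by ring
    _ ≤ u * (t / 2) := mul_le_mul_of_nonneg_left h1 hu
    _ = t / 2 * u := by ring

private lemma sqrt_bracket {c₀ α z : ℝ} (hc : 0 < c₀) (hα : 0 ≤ α)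
    (h1 : α * (3 * c₀)⁻¹ ≤ z ^ 2) (h2 : z ^ 2 ≤ 4 * α * c₀⁻¹) :
    Real.sqrt ((3 * c₀)⁻¹) * Real.sqrt α ≤ |z| ∧
      |z| ≤ 2 * Real.sqrt c₀⁻¹ * Real.sqrt α := by
  have habs : |z| = Real.sqrt (z ^ 2) := (Real.sqrt_sq_eq_abs z).symm
  constructor
  · rw [habs]
    calc Real.sqrt ((3 * c₀)⁻¹) * Real.sqrt α = Real.sqrt (α * (3 * c₀)⁻¹) := by
          rw [Real.sqrt_mul hα]; ring
      _ ≤ Real.sqrt (z ^ 2) := Real.sqrt_le_sqrt h1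
  · rw [habs]
    calc Real.sqrt (z ^ 2) ≤ Real.sqrt (4 * α * c₀⁻¹) := Real.sqrt_le_sqrt h2
      _ = Real.sqrt 4 * Real.sqrt α * Real.sqrt c₀⁻¹ := by
          rw [Real.sqrt_mul (by positivity), Real.sqrt_mul (by norm_num : (0:ℝ) ≤ 4)]
      _ = 2 * Real.sqrt c₀⁻¹ * Real.sqrt α := by
          rw [show (4:ℝ) = 2 ^ 2 by norm_num, Real.sqrt_sq (by norm_num : (0:ℝ) ≤ 2)]
          ring

set_option maxHeartbeats 2000000 in
/-- Asymptotic size of the action `ℓ₀(α) = −Im ∫_{x₊(α)}^{x₋(α)} g(y,α) dy ≍ α^{3/2}`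
and of the Poisson brackets `∓Im ∂ₓg(x±(α), α) ≍ √α` for the model symbol `ξ + g(x,α)`. -/
theorem stmt_1
    (g : ℝ → ℝ → ℂ)
    (hg : ContDiff ℝ (⊤ : ℕ∞) (fun p : ℝ × ℝ => g p.1 p.2))
    (h00 : g 0 0 = 0)
    (hga : deriv (fun a : ℝ => g 0 a) 0 = -Complex.I)
    (hgx : deriv (fun x : ℝ => g x 0) 0 = 0)
    (hgxx : 0 < (deriv (deriv (fun x : ℝ => g x 0)) 0).im)
    (him : ∀ x : ℝ, x ≠ 0 → 0 < (g x 0).im)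
    -- the data of the splitting lemma
    (α₁ δ : ℝ) (hα₁ : 0 < α₁) (hδ : 0 < δ)
    (xp xm : ℝ → ℝ)
    (hsplit : ∀ α ∈ Set.Ioo (0:ℝ) α₁,
      {x ∈ Set.Ioo (-δ) δ | (g x α).im = 0} = {xp α, xm α} ∧
      xp α < 0 ∧ 0 < xm α ∧
      (deriv (fun x => g x α) (xp α)).im < 0 ∧
      0 < (deriv (fun x => g x α) (xm α)).im) :
    ∃ α₀ C : ℝ, 0 < α₀ ∧ 0 < C ∧ ∀ α ∈ Set.Ioo (0:ℝ) α₀,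
      -- (i) ℓ₀(α) ≍ α^{3/2}
      α ^ ((3:ℝ)/2) / C ≤ -(∫ y in (xp α)..(xm α), g y α).im ∧
      -(∫ y in (xp α)..(xm α), g y α).im ≤ C * α ^ ((3:ℝ)/2) ∧
      -- (ii) −Im ∂ₓg(x₊(α), α) ≍ √α
      Real.sqrt α / C ≤ -(deriv (fun x => g x α) (xp α)).im ∧
      -(deriv (fun x => g x α) (xp α)).im ≤ C * Real.sqrt α ∧
      -- (iii) Im ∂ₓg(x₋(α), α) ≍ √α
      Real.sqrt α / C ≤ (deriv (fun x => g x α) (xm α)).im ∧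
      (deriv (fun x => g x α) (xm α)).im ≤ C * Real.sqrt α := by
  have h00im : (g 0 0).im = 0 := by rw [h00]; rfl
  have hP1_00 : P1 g (0, 0) = 0 := P1_00 hg hgx
  have h2pos : 0 < P11 g (0, 0) := P11_00_pos hg hgxx
  obtain ⟨c₀, hc₀, hc₀val⟩ : ∃ c : ℝ, 0 < c ∧ P11 g (0, 0) = 2 * c :=
    ⟨P11 g (0, 0) / 2, by linarith, by ring⟩
  -- continuity facts
  have hgc2 : Continuous (fun p : ℝ × ℝ => g p.1 p.2) := hg.continuous
  have hgcα : ∀ w : ℝ, Continuous fun y : ℝ => g y w := fun w =>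
    hgc2.comp (continuous_id.prodMk continuous_const)
  have hgic : ∀ w : ℝ, Continuous fun y : ℝ => (g y w).im := fun w =>
    Complex.continuous_im.comp (hgcα w)
  -- radius r
  obtain ⟨r, hrpos, hra, hrb, hrδ, hr1⟩ :
      ∃ r : ℝ, 0 < r ∧
        (∀ t : ℝ, |t| ≤ r → c₀ ≤ P11 g (t, 0) ∧ P11 g (t, 0) ≤ 3 * c₀) ∧
        (∀ x a : ℝ, |x| ≤ r → |a| ≤ r → -2 ≤ P2 g (x, a) ∧ P2 g (x, a) ≤ -1/2) ∧
        r < δ ∧ r ≤ 1 := by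
    have hcP11 : Continuous (fun x : ℝ => P11 g (x, 0)) :=
      (contP11 hg).comp (continuous_id.prodMk continuous_const)
    have hU : IsOpen {x : ℝ | c₀ < P11 g (x, 0) ∧ P11 g (x, 0) < 3 * c₀} := by
      have he : {x : ℝ | c₀ < P11 g (x, 0) ∧ P11 g (x, 0) < 3 * c₀}
          = (fun x : ℝ => P11 g (x, 0)) ⁻¹' (Ioo c₀ (3 * c₀)) := rfl
      rw [he]; exact isOpen_Ioo.preimage hcP11
    have h0U : (0:ℝ) ∈ {x : ℝ | c₀ < P11 g (x, 0) ∧ P11 g (x, 0) < 3 * c₀} := by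
      constructor
      · show c₀ < P11 g (0, 0)
        rw [hc₀val]; linarith
      · show P11 g (0, 0) < 3 * c₀
        rw [hc₀val]; linarith
    obtain ⟨ε₁, hε₁pos, hball₁⟩ := Metric.isOpen_iff.1 hU 0 h0U
    have hV : IsOpen {p : ℝ × ℝ | -2 < P2 g p ∧ P2 g p < -1/2} := by
      have he : {p : ℝ × ℝ | -2 < P2 g p ∧ P2 g p < -1/2}
          = P2 g ⁻¹' (Ioo (-2) (-1/2)) := rfl
      rw [he]; exact isOpen_Ioo.preimage (contP2 hg)
    have h0V : ((0:ℝ), (0:ℝ)) ∈ {p : ℝ × ℝ | -2 < P2 g p ∧ P2 g p < -1/2} := by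
      have := P2_00 hg hga
      constructor <;> rw [this] <;> norm_num
    obtain ⟨ε₂, hε₂pos, hball₂⟩ := Metric.isOpen_iff.1 hV (0, 0) h0V
    refine ⟨min (min (ε₁/2) (ε₂/2)) (min (δ/2) 1), by positivity, ?_, ?_, ?_, ?_⟩
    · intro t ht
      have hmem : t ∈ Metric.ball (0:ℝ) ε₁ := by
        rw [Metric.mem_ball, Real.dist_eq, sub_zero]
        calc |t| ≤ min (min (ε₁/2) (ε₂/2)) (min (δ/2) 1) := ht
          _ ≤ ε₁/2 := le_trans (min_le_left _ _) (min_le_left _ _)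
          _ < ε₁ := by linarith
      exact ⟨(hball₁ hmem).1.le, (hball₁ hmem).2.le⟩
    · intro x a hx ha
      have hmem : ((x, a) : ℝ × ℝ) ∈ Metric.ball ((0:ℝ), (0:ℝ)) ε₂ := by
        rw [Metric.mem_ball, Prod.dist_eq]
        apply max_lt <;> rw [Real.dist_eq, sub_zero]
        · calc |x| ≤ _ := hx
            _ ≤ ε₂/2 := le_trans (min_le_left _ _) (min_le_right _ _)
            _ < ε₂ := by linarith
        · calc |a| ≤ _ := ha
            _ ≤ ε₂/2 := le_trans (min_le_left _ _) (min_le_right _ _)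
            _ < ε₂ := by linarith
      exact ⟨(hball₂ hmem).1.le, (hball₂ hmem).2.le⟩
    · calc min (min (ε₁/2) (ε₂/2)) (min (δ/2) 1) ≤ δ/2 :=
          le_trans (min_le_right _ _) (min_le_left _ _)
        _ < δ := by linarith
    · exact le_trans (min_le_right _ _) (min_le_right _ _)
  have hra' : ∀ t ∈ Icc (-r) r, c₀ ≤ P11 g (t, 0) ∧ P11 g (t, 0) ≤ 3 * c₀ :=
    fun t ht => hra t (abs_le.2 ⟨ht.1, ht.2⟩)
  -- compact bounds
  obtain ⟨M, hMnn, hM⟩ : ∃ M : ℝ, 0 ≤ M ∧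
      ∀ x a : ℝ, |x| ≤ δ → |a| ≤ r → |P2 g (x, a)| ≤ M := by
    have hcomp : IsCompact (Icc (-δ) δ ×ˢ Icc (-r) r) := isCompact_Icc.prod isCompact_Icc
    obtain ⟨M0, hM0⟩ := hcomp.exists_bound_of_continuousOn (contP2 hg).continuousOn
    refine ⟨max M0 0, le_max_right _ _, fun x a hx ha => ?_⟩
    have hmem : ((x, a) : ℝ × ℝ) ∈ Icc (-δ) δ ×ˢ Icc (-r) r :=
      ⟨⟨(abs_le.1 hx).1, (abs_le.1 hx).2⟩, ⟨(abs_le.1 ha).1, (abs_le.1 ha).2⟩⟩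
    calc |P2 g (x, a)| = ‖P2 g (x, a)‖ := (Real.norm_eq_abs _).symm
      _ ≤ M0 := hM0 _ hmem
      _ ≤ max M0 0 := le_max_left _ _
  obtain ⟨K, hK1, hK⟩ : ∃ K : ℝ, 1 ≤ K ∧
      ∀ x a : ℝ, |x| ≤ r → |a| ≤ r → |P12 g (x, a)| ≤ K := by
    have hcomp : IsCompact (Icc (-r) r ×ˢ Icc (-r) r) := isCompact_Icc.prod isCompact_Icc
    obtain ⟨K0, hK0⟩ := hcomp.exists_bound_of_continuousOn (contP12 hg).continuousOn
    refine ⟨max K0 1, le_max_right _ _, fun x a hx ha => ?_⟩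
    have hmem : ((x, a) : ℝ × ℝ) ∈ Icc (-r) r ×ˢ Icc (-r) r :=
      ⟨⟨(abs_le.1 hx).1, (abs_le.1 hx).2⟩, ⟨(abs_le.1 ha).1, (abs_le.1 ha).2⟩⟩
    calc |P12 g (x, a)| = ‖P12 g (x, a)‖ := (Real.norm_eq_abs _).symm
      _ ≤ K0 := hK0 _ hmem
      _ ≤ max K0 1 := le_max_left _ _
  obtain ⟨m, hmpos, hm⟩ : ∃ m : ℝ, 0 < m ∧
      ∀ x : ℝ, |x| ≤ δ → r ≤ |x| → m ≤ (g x 0).im := by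
    have hScomp : IsCompact (Icc (-δ) δ \ Ioo (-r) r) := isCompact_Icc.diff isOpen_Ioo
    have hSne : (Icc (-δ) δ \ Ioo (-r) r).Nonempty :=
      ⟨δ, ⟨by constructor <;> linarith, fun h => absurd h.2 (by push_neg; linarith)⟩⟩
    obtain ⟨x₀, hx₀S, hx₀min⟩ := hScomp.exists_isMinOn hSne (hgic 0).continuousOn
    refine ⟨(g x₀ 0).im, him x₀ ?_, fun x hx h2 => ?_⟩
    · intro h
      exact hx₀S.2 (by rw [h]; exact ⟨by linarith, hrpos⟩)
    · exact isMinOn_iff.1 hx₀min x ⟨⟨(abs_le.1 hx).1, (abs_le.1 hx).2⟩,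
        fun hC => absurd (abs_lt.2 ⟨hC.1, hC.2⟩) (not_lt.2 h2)⟩
  have hKpos : 0 < K := lt_of_lt_of_le one_pos hK1
  -- the constants
  set a₁ : ℝ := Real.sqrt ((3 * c₀)⁻¹) with ha₁def
  set a₂ : ℝ := 2 * Real.sqrt c₀⁻¹ with ha₂def
  set b₁ : ℝ := Real.sqrt ((6 * c₀)⁻¹) with hb₁def
  have ha₁pos : 0 < a₁ := Real.sqrt_pos.2 (by positivity)
  have ha₂pos : 0 < a₂ := by positivity
  have hb₁pos : 0 < b₁ := Real.sqrt_pos.2 (by positivity)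
  have hb₁a₁ : b₁ ≤ a₁ := Real.sqrt_le_sqrt (by
    rw [inv_le_inv₀ (by positivity) (by positivity)]; linarith)
  refine ⟨min (min α₁ r) (min (m / (M + 1)) ((c₀ * a₁ / (2 * K)) ^ 2)),
    max (max (2 / b₁) (4 * a₂)) (max (2 / (c₀ * a₁)) (3 * c₀ * a₂ + K)), by positivity, ?_, ?_⟩
  · have : (0:ℝ) < 2 / b₁ := by positivity
    calc (0:ℝ) < 2 / b₁ := this
      _ ≤ max (2 / b₁) (4 * a₂) := le_max_left _ _
      _ ≤ _ := le_max_left _ _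
  set C : ℝ := max (max (2 / b₁) (4 * a₂)) (max (2 / (c₀ * a₁)) (3 * c₀ * a₂ + K)) with hCdef
  intro α hα
  obtain ⟨hαpos, hαlt⟩ := hα
  have hαα₁ : α < α₁ := lt_of_lt_of_le hαlt (le_trans (min_le_left _ _) (min_le_left _ _))
  have hαr : α < r := lt_of_lt_of_le hαlt (le_trans (min_le_left _ _) (min_le_right _ _))
  have hαm : α < m / (M + 1) :=
    lt_of_lt_of_le hαlt (le_trans (min_le_right _ _) (min_le_left _ _))
  have hαK2 : α < (c₀ * a₁ / (2 * K)) ^ 2 :=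
    lt_of_lt_of_le hαlt (le_trans (min_le_right _ _) (min_le_right _ _))
  have hα1 : α ≤ 1 := le_trans hαr.le hr1
  have hsqnn : 0 ≤ Real.sqrt α := Real.sqrt_nonneg α
  have hsqpos : 0 < Real.sqrt α := Real.sqrt_pos.2 hαpos
  have hsq1 : Real.sqrt α ≤ 1 := by
    rw [show (1:ℝ) = Real.sqrt 1 by simp]; exact Real.sqrt_le_sqrt hα1
  have hsqsq : Real.sqrt α * Real.sqrt α = α := Real.mul_self_sqrt hαpos.le
  have hαK : K * α ≤ c₀ * a₁ / 2 * Real.sqrt α := by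
    have h1 : Real.sqrt α ≤ c₀ * a₁ / (2 * K) := by
      have := Real.sqrt_le_sqrt hαK2.le
      rwa [Real.sqrt_sq (by positivity)] at this
    calc K * α = K * Real.sqrt α * Real.sqrt α := by rw [mul_assoc, hsqsq]
      _ ≤ K * (c₀ * a₁ / (2 * K)) * Real.sqrt α := by
          apply mul_le_mul_of_nonneg_right (mul_le_mul_of_nonneg_left h1 hKpos.le) hsqnn
      _ = c₀ * a₁ / 2 * Real.sqrt α := by field_simp
  obtain ⟨hzs, hxpneg, hxmpos, hdxp, hdxm⟩ := hsplit α ⟨hαpos, hαα₁⟩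
  -- membership of the zeros
  have hxpmem : xp α ∈ Ioo (-δ) δ ∧ (g (xp α) α).im = 0 := by
    have h1 : xp α ∈ ({xp α, xm α} : Set ℝ) := by left; rfl
    rw [← hzs] at h1; exact h1
  have hxmmem : xm α ∈ Ioo (-δ) δ ∧ (g (xm α) α).im = 0 := by
    have h1 : xm α ∈ ({xp α, xm α} : Set ℝ) := by right; rfl
    rw [← hzs] at h1; exact h1
  -- MVT in the α-variable
  have mvtα : ∀ x : ℝ, ∃ θ ∈ Ioo (0:ℝ) α,
      (g x α).im - (g x 0).im = α * P2 g (x, θ) := by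
    intro x
    obtain ⟨θ, hθ, heq⟩ := mvt_pos (v := fun a => Fim g (x, a))
      (v' := fun a => P2 g (x, a)) (fun t => hasDeriv_a hg x t) hαpos
    exact ⟨θ, hθ, by simpa [Fim] using heq⟩
  have mvtP1 : ∀ x : ℝ, ∃ θ ∈ Ioo (0:ℝ) α,
      P1 g (x, α) - P1 g (x, 0) = α * P12 g (x, θ) := by
    intro x
    obtain ⟨θ, hθ, heq⟩ := mvt_pos (v := fun a => P1 g (x, a))
      (v' := fun a => P12 g (x, a)) (fun t => hasDeriv_P1a hg x t) hαpos
    exact ⟨θ, hθ, by simpa using heq⟩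
  -- localization of zeros
  have hloc : ∀ x ∈ Ioo (-δ) δ, (g x α).im = 0 → |x| < r := by
    intro x hxI hx0
    by_contra hcon
    push_neg at hcon
    obtain ⟨θ, hθ, heq⟩ := mvtα x
    have hθr : |θ| ≤ r := by
      rw [abs_le]; constructor <;> [linarith [hθ.1]; linarith [hθ.2, hαr]]
    have hxδ : |x| ≤ δ := by rw [abs_le]; exact ⟨hxI.1.le, hxI.2.le⟩
    have hmle : m ≤ (g x 0).im := hm x hxδ hcon
    have hP2b : |P2 g (x, θ)| ≤ M := hM x θ hxδ hθr
    have h1 : (g x 0).im ≤ α * M := by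
      rw [hx0] at heq
      have h3 := (abs_le.1 hP2b).1
      have h4 : α * (-M) ≤ α * P2 g (x, θ) :=
        mul_le_mul_of_nonneg_left (by linarith) hαpos.le
      nlinarith
    have h2 : α * (M + 1) < m := by
      rw [lt_div_iff₀ (by positivity)] at hαm; linarith
    linarith
  have hxpr : |xp α| < r := hloc _ hxpmem.1 hxpmem.2
  have hxmr : |xm α| < r := hloc _ hxmmem.1 hxmmem.2
  -- quadratic bounds for Im g(·,0)
  have hq : ∀ x ∈ Icc (-r) r,
      c₀ / 2 * x ^ 2 ≤ (g x 0).im ∧ (g x 0).im ≤ 3 * c₀ / 2 * x ^ 2 :=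
    fun x hx => quad_bounds hg h00im hP1_00 hc₀ hra' hx
  have hlin := fun (x : ℝ) (hx : x ∈ Icc (-r) r) => P1_linear hg hP1_00 hra' hx
  have him0 : ∀ x : ℝ, 0 ≤ (g x 0).im := by
    intro x
    rcases eq_or_ne x 0 with h | h
    · rw [h, h00im]
    · exact (him x h).le
  -- quantitative zero location
  have hzloc : ∀ z : ℝ, |z| < r → (g z α).im = 0 →
      a₁ * Real.sqrt α ≤ |z| ∧ |z| ≤ a₂ * Real.sqrt α := by
    intro z hzr hz0
    obtain ⟨θ, hθ, heq⟩ := mvtα z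
    have hθr : |θ| ≤ r := by
      rw [abs_le]; constructor <;> [linarith [hθ.1]; linarith [hθ.2, hαr]]
    obtain ⟨hb1, hb2⟩ := hrb z θ hzr.le hθr
    have hz2 : α / 2 ≤ (g z 0).im ∧ (g z 0).im ≤ 2 * α := by
      rw [hz0] at heq
      have h4 : α * P2 g (z, θ) ≤ α * (-1/2) := mul_le_mul_of_nonneg_left hb2 hαpos.le
      have h5 : α * (-2) ≤ α * P2 g (z, θ) := mul_le_mul_of_nonneg_left hb1 hαpos.le
      constructor <;> linarith
    have hzmem : z ∈ Icc (-r) r := ⟨(abs_le.1 hzr.le).1, (abs_le.1 hzr.le).2⟩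
    obtain ⟨hql, hqu⟩ := hq z hzmem
    have h1 : α * (3 * c₀)⁻¹ ≤ z ^ 2 := by
      rw [mul_inv_le_iff₀ (by positivity)]; linarith [hz2.1, hqu]
    have h2 : z ^ 2 ≤ 4 * α * c₀⁻¹ := by
      rw [show 4 * α * c₀⁻¹ = 4 * α / c₀ by ring, le_div_iff₀ hc₀]
      linarith [hz2.2, hql]
    obtain ⟨hs1, hs2⟩ := sqrt_bracket hc₀ hαpos.le h1 h2
    exact ⟨by rw [ha₁def]; exact hs1, by rw [ha₂def]; exact hs2⟩
  -- zero magnitudes with sign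
  have hxpa : a₁ * Real.sqrt α ≤ -(xp α) ∧ -(xp α) ≤ a₂ * Real.sqrt α := by
    have h := hzloc (xp α) hxpr hxpmem.2
    rwa [abs_of_neg hxpneg] at h
  have hxma : a₁ * Real.sqrt α ≤ xm α ∧ xm α ≤ a₂ * Real.sqrt α := by
    have h := hzloc (xm α) hxmr hxmmem.2
    rwa [abs_of_pos hxmpos] at h
  have hααsq : α ≤ Real.sqrt α := by
    calc α = Real.sqrt α * Real.sqrt α := hsqsq.symm
      _ ≤ Real.sqrt α * 1 := mul_le_mul_of_nonneg_left hsq1 hsqnn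
      _ = Real.sqrt α := mul_one _
  -- derivative estimates at the zeros
  have hxm_est : c₀ * a₁ / 2 * Real.sqrt α ≤ P1 g (xm α, α) ∧
      P1 g (xm α, α) ≤ (3 * c₀ * a₂ + K) * Real.sqrt α := by
    obtain ⟨θ, hθ, heq⟩ := mvtP1 (xm α)
    have hθr : |θ| ≤ r := by
      rw [abs_le]; constructor <;> [linarith [hθ.1]; linarith [hθ.2, hαr]]
    have hKb := abs_le.1 (hK (xm α) θ hxmr.le hθr)
    have hxmIcc : xm α ∈ Icc (-r) r := ⟨(abs_le.1 hxmr.le).1, (abs_le.1 hxmr.le).2⟩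
    obtain ⟨hl1, hl2⟩ := (hlin (xm α) hxmIcc).1 hxmpos.le
    have e1 : α * (-K) ≤ α * P12 g (xm α, θ) := mul_le_mul_of_nonneg_left hKb.1 hαpos.le
    have e2 : α * P12 g (xm α, θ) ≤ α * K := mul_le_mul_of_nonneg_left hKb.2 hαpos.le
    have e3 : c₀ * (a₁ * Real.sqrt α) ≤ c₀ * xm α := mul_le_mul_of_nonneg_left hxma.1 hc₀.le
    have e4 : 3 * c₀ * xm α ≤ 3 * c₀ * (a₂ * Real.sqrt α) :=
      mul_le_mul_of_nonneg_left hxma.2 (by positivity)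
    have e5 : K * α ≤ K * Real.sqrt α := mul_le_mul_of_nonneg_left hααsq hKpos.le
    constructor
    · linarith [e1, e3, hl1, hαK, heq]
    · linarith [e2, e4, hl2, e5, heq]
  have hxp_est : c₀ * a₁ / 2 * Real.sqrt α ≤ -(P1 g (xp α, α)) ∧
      -(P1 g (xp α, α)) ≤ (3 * c₀ * a₂ + K) * Real.sqrt α := by
    obtain ⟨θ, hθ, heq⟩ := mvtP1 (xp α)
    have hθr : |θ| ≤ r := by
      rw [abs_le]; constructor <;> [linarith [hθ.1]; linarith [hθ.2, hαr]]
    have hKb := abs_le.1 (hK (xp α) θ hxpr.le hθr)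
    have hxpIcc : xp α ∈ Icc (-r) r := ⟨(abs_le.1 hxpr.le).1, (abs_le.1 hxpr.le).2⟩
    obtain ⟨hl1, hl2⟩ := (hlin (xp α) hxpIcc).2 hxpneg.le
    have e1 : α * (-K) ≤ α * P12 g (xp α, θ) := mul_le_mul_of_nonneg_left hKb.1 hαpos.le
    have e2 : α * P12 g (xp α, θ) ≤ α * K := mul_le_mul_of_nonneg_left hKb.2 hαpos.le
    have e3 : c₀ * (a₁ * Real.sqrt α) ≤ c₀ * (-(xp α)) := mul_le_mul_of_nonneg_left hxpa.1 hc₀.le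
    have e4 : 3 * c₀ * (-(xp α)) ≤ 3 * c₀ * (a₂ * Real.sqrt α) :=
      mul_le_mul_of_nonneg_left hxpa.2 (by positivity)
    have e5 : K * α ≤ K * Real.sqrt α := mul_le_mul_of_nonneg_left hααsq hKpos.le
    constructor
    · linarith [e2, e3, hl2, hαK, heq]
    · linarith [e1, e4, hl1, e5, heq]
  have hderxm : (deriv (fun x => g x α) (xm α)).im = P1 g (xm α, α) :=
    (P1_eq_deriv hg _ _).symm
  have hderxp : (deriv (fun x => g x α) (xp α)).im = P1 g (xp α, α) :=
    (P1_eq_deriv hg _ _).symm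
  -- negativity of Im g(·,α) between the zeros
  have hxpxm : xp α < xm α := lt_trans hxpneg hxmpos
  have hf0neg : (g (0:ℝ) α).im < 0 := by
    obtain ⟨θ, hθ, heq⟩ := mvtα 0
    have hθr : |θ| ≤ r := by
      rw [abs_le]; constructor <;> [linarith [hθ.1]; linarith [hθ.2, hαr]]
    have hb2 := (hrb 0 θ (by rw [abs_zero]; exact hrpos.le) hθr).2
    have h4 : α * P2 g (0, θ) ≤ α * (-1/2) := mul_le_mul_of_nonneg_left hb2 hαpos.le
    have h5 : (g (0:ℝ) 0).im = 0 := h00im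
    linarith
  have hfneg : ∀ y ∈ Icc (xp α) (xm α), (g y α).im ≤ 0 := by
    intro y hy
    rcases eq_or_lt_of_le hy.1 with h | h
    · rw [← h, hxpmem.2]
    rcases eq_or_lt_of_le hy.2 with h2 | h2
    · rw [h2, hxmmem.2]
    by_contra hpos
    push_neg at hpos
    have hyne : y ≠ 0 := by rintro rfl; linarith
    have hxpδ := hxpmem.1
    have hxmδ := hxmmem.1
    rcases lt_or_gt_of_ne hyne with hy0 | hy0
    · have hsub := intermediate_value_Ioo' hy0.le (hgic α).continuousOn
      have h0mem : (0:ℝ) ∈ Ioo ((g (0:ℝ) α).im) ((g y α).im) := ⟨hf0neg, hpos⟩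
      obtain ⟨z, hzI, hz0⟩ := hsub h0mem
      have hzmem : z ∈ {x ∈ Ioo (-δ) δ | (g x α).im = 0} :=
        ⟨⟨by linarith [hzI.1, hxpδ.1], by linarith [hzI.2]⟩, hz0⟩
      rw [hzs] at hzmem
      rcases hzmem with h3 | h3
      · rw [h3] at hzI; linarith [hzI.1]
      · rw [h3] at hzI; linarith [hzI.2]
    · have hsub := intermediate_value_Ioo hy0.le (hgic α).continuousOn
      have h0mem : (0:ℝ) ∈ Ioo ((g (0:ℝ) α).im) ((g y α).im) := ⟨hf0neg, hpos⟩
      obtain ⟨z, hzI, hz0⟩ := hsub h0mem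
      have hzmem : z ∈ {x ∈ Ioo (-δ) δ | (g x α).im = 0} :=
        ⟨⟨by linarith [hzI.1], by linarith [hzI.2, hxmδ.2]⟩, hz0⟩
      rw [hzs] at hzmem
      rcases hzmem with h3 | h3
      · rw [h3] at hzI; linarith [hzI.1]
      · rw [h3] at hzI; linarith [hzI.2]
  -- pointwise bounds on the interval
  have hmemr : ∀ y ∈ Icc (xp α) (xm α), |y| < r := by
    intro y hy
    rw [abs_lt]
    exact ⟨by linarith [hy.1, (abs_lt.1 hxpr).1], by linarith [hy.2, (abs_lt.1 hxmr).2]⟩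
  have hflb : ∀ y ∈ Icc (xp α) (xm α), -(2*α) ≤ (g y α).im := by
    intro y hy
    obtain ⟨θ, hθ, heq⟩ := mvtα y
    have hθr : |θ| ≤ r := by
      rw [abs_le]; constructor <;> [linarith [hθ.1]; linarith [hθ.2, hαr]]
    have hb1 := (hrb y θ (hmemr y hy).le hθr).1
    have h5 : α * (-2) ≤ α * P2 g (y, θ) := mul_le_mul_of_nonneg_left hb1 hαpos.le
    have h6 := him0 y
    linarith
  -- integral upper bound
  have hintf : ∀ u v : ℝ, IntervalIntegrable (fun y => (g y α).im) MeasureTheory.volume u v :=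
    fun u v => (hgic α).intervalIntegrable u v
  have hintf' : ∀ u v : ℝ, IntervalIntegrable (fun y => -(g y α).im) MeasureTheory.volume u v :=
    fun u v => (hgic α).neg.intervalIntegrable u v
  have hupper : -(∫ y in xp α..xm α, (g y α).im) ≤ 4 * a₂ * (α * Real.sqrt α) := by
    have h1 : (∫ y in xp α..xm α, -(g y α).im) ≤ ∫ y in xp α..xm α, (2*α : ℝ) :=
      intervalIntegral.integral_mono_on hxpxm.le (hintf' _ _) intervalIntegrable_const
        (fun y hy => by linarith [hflb y hy])
    rw [intervalIntegral.integral_neg, intervalIntegral.integral_const, smul_eq_mul] at h1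
    have h2 : xm α - xp α ≤ 2 * (a₂ * Real.sqrt α) := by linarith [hxpa.2, hxma.2]
    have h3 : (xm α - xp α) * (2*α) ≤ 2 * (a₂ * Real.sqrt α) * (2*α) :=
      mul_le_mul_of_nonneg_right h2 (by positivity)
    linarith
  -- integral lower bound
  have hslb : b₁ * Real.sqrt α ≤ a₁ * Real.sqrt α :=
    mul_le_mul_of_nonneg_right hb₁a₁ hsqnn
  have hmid : ∀ y ∈ Icc (-(b₁ * Real.sqrt α)) (b₁ * Real.sqrt α), (g y α).im ≤ -(α/4) := by
    intro y hy
    have hyr : |y| < r := by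
      rw [abs_lt]
      constructor
      · have := (abs_lt.1 hxpr).1; linarith [hy.1, hxpa.1]
      · have := (abs_lt.1 hxmr).2; linarith [hy.2, hxma.1]
    obtain ⟨θ, hθ, heq⟩ := mvtα y
    have hθr : |θ| ≤ r := by
      rw [abs_le]; constructor <;> [linarith [hθ.1]; linarith [hθ.2, hαr]]
    have hb2 := (hrb y θ hyr.le hθr).2
    have h4 : α * P2 g (y, θ) ≤ α * (-1/2) := mul_le_mul_of_nonneg_left hb2 hαpos.le
    have hqu := (hq y ⟨(abs_le.1 hyr.le).1, (abs_le.1 hyr.le).2⟩).2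
    have hysq : y ^ 2 ≤ (b₁ * Real.sqrt α) ^ 2 := sq_le_sq' hy.1 hy.2
    have hb₁sq : (b₁ * Real.sqrt α) ^ 2 = (6*c₀)⁻¹ * α := by
      rw [mul_pow, Real.sq_sqrt hαpos.le, hb₁def, Real.sq_sqrt (by positivity)]
    have hkey : 3 * c₀ / 2 * ((6*c₀)⁻¹ * α) = α / 4 := by
      field_simp; ring
    have h7 : (g y 0).im ≤ 3 * c₀ / 2 * ((6*c₀)⁻¹ * α) := by
      rw [← hb₁sq]
      calc (g y 0).im ≤ 3 * c₀ / 2 * y ^ 2 := hqu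
        _ ≤ 3 * c₀ / 2 * (b₁ * Real.sqrt α) ^ 2 :=
            mul_le_mul_of_nonneg_left hysq (by positivity)
    rw [hkey] at h7
    linarith
  have hlower : b₁ / 2 * (α * Real.sqrt α) ≤ -(∫ y in xp α..xm α, (g y α).im) := by
    have hsx : b₁ * Real.sqrt α ≤ xm α := le_trans hslb hxma.1
    have hsp : xp α ≤ -(b₁ * Real.sqrt α) := by linarith [hslb, hxpa.1]
    have hspos : 0 < b₁ * Real.sqrt α := by positivity
    have hint1 : (0:ℝ) ≤ ∫ y in xp α..(-(b₁ * Real.sqrt α)), -(g y α).im := by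
      apply intervalIntegral.integral_nonneg hsp
      intro y hy
      have := hfneg y ⟨hy.1, by linarith [hy.2]⟩
      linarith
    have hint3 : (0:ℝ) ≤ ∫ y in (b₁ * Real.sqrt α)..(xm α), -(g y α).im := by
      apply intervalIntegral.integral_nonneg hsx
      intro y hy
      have := hfneg y ⟨by linarith [hy.1], hy.2⟩
      linarith
    have hint2 : 2 * (b₁ * Real.sqrt α) * (α/4) ≤
        ∫ y in (-(b₁ * Real.sqrt α))..(b₁ * Real.sqrt α), -(g y α).im := by
      have h := intervalIntegral.integral_mono_on (f := fun _ : ℝ => α/4)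
        (g := fun y => -(g y α).im)
        (by linarith : -(b₁ * Real.sqrt α) ≤ b₁ * Real.sqrt α)
        intervalIntegrable_const (hintf' _ _)
        (fun y hy => by linarith [hmid y hy])
      rw [intervalIntegral.integral_const, smul_eq_mul] at h
      calc 2 * (b₁ * Real.sqrt α) * (α/4)
          = (b₁ * Real.sqrt α - -(b₁ * Real.sqrt α)) * (α/4) := by ring
        _ ≤ _ := h
    have hsplit2 : (∫ y in xp α..(-(b₁ * Real.sqrt α)), -(g y α).im) +
        (∫ y in (-(b₁ * Real.sqrt α))..(b₁ * Real.sqrt α), -(g y α).im) +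
        (∫ y in (b₁ * Real.sqrt α)..(xm α), -(g y α).im) =
        ∫ y in xp α..xm α, -(g y α).im := by
      rw [intervalIntegral.integral_add_adjacent_intervals (hintf' _ _) (hintf' _ _),
        intervalIntegral.integral_add_adjacent_intervals (hintf' _ _) (hintf' _ _)]
    have hneg : (∫ y in xp α..xm α, -(g y α).im) = -∫ y in xp α..xm α, (g y α).im :=
      intervalIntegral.integral_neg
    linarith [hint1, hint2, hint3, hsplit2, hneg]
  -- exponent identity
  have hpow : α ^ ((3:ℝ)/2) = α * Real.sqrt α := by
    rw [show (3:ℝ)/2 = 1 + 1/2 by norm_num, Real.rpow_add hαpos, Real.rpow_one,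
      ← Real.sqrt_eq_rpow]
  -- C facts
  have hC1 : 2 / b₁ ≤ C := le_trans (le_max_left _ _) (le_max_left _ _)
  have hC2 : 4 * a₂ ≤ C := le_trans (le_max_right _ _) (le_max_left _ _)
  have hC3 : 2 / (c₀ * a₁) ≤ C := le_trans (le_max_left _ _) (le_max_right _ _)
  have hC4 : 3 * c₀ * a₂ + K ≤ C := le_trans (le_max_right _ _) (le_max_right _ _)
  have hIm : (∫ y in xp α..xm α, g y α).im = ∫ y in xp α..xm α, (g y α).im :=
    im_integral (hgcα α)
  refine ⟨?_, ?_, ?_, ?_, ?_, ?_⟩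
  · rw [hIm, hpow]
    have h := div_le_half_mul (by positivity : (0:ℝ) ≤ α * Real.sqrt α) hb₁pos hC1
    linarith
  · rw [hIm, hpow]
    have h : 4 * a₂ * (α * Real.sqrt α) ≤ C * (α * Real.sqrt α) :=
      mul_le_mul_of_nonneg_right hC2 (by positivity)
    linarith
  · rw [hderxp]
    have h := div_le_half_mul hsqnn (by positivity : (0:ℝ) < c₀ * a₁) hC3
    linarith [hxp_est.1]
  · rw [hderxp]
    have h : (3 * c₀ * a₂ + K) * Real.sqrt α ≤ C * Real.sqrt α :=
      mul_le_mul_of_nonneg_right hC4 hsqnn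
    linarith [hxp_est.2]
  · rw [hderxm]
    have h := div_le_half_mul hsqnn (by positivity : (0:ℝ) < c₀ * a₁) hC3
    linarith [hxm_est.1]
  · rw [hderxm]
    have h : (3 * c₀ * a₂ + K) * Real.sqrt α ≤ C * Real.sqrt α :=
      mul_le_mul_of_nonneg_right hC4 hsqnn
    linarith [hxm_est.2]
end

section
/- There exist C > 0 and h₀ > 0, depending only on C₀ and C₁, such that for all h ∈ (0, h₀) and all x, y ∈ ℝ: |k(x, y)| ≤ (C/h) · exp(−|x − y| / (C √h)). -/
/-!
On its support the kernel has modulus `h⁻¹ exp (Im (∫_y^x g̃) / h)`. There the bounds on `Im g̃`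
say that `Im g̃` decreases linearly away from `x₊` up to an `O(h²)` error, so with `d = |x - y|`
one gets `Im ∫_y^x g̃ ≤ C h² d - d² / (2C)`. After division by `h` this is Gaussian decay at
scale `√h`, which dominates the linear rate `d / √h` up to an additive constant `K` depending only
on `C₀, C₁`; taking `C = exp K` absorbs that constant into the prefactor.
-/

open Complex MeasureTheory

/-- The integral kernel of the forward solution operator of `(h/i)u' + g̃u = v`, `u(x₊) = 0`. -/
noncomputable def kker (xp h : ℝ) (gt : ℝ → ℂ) (x y : ℝ) : ℂ :=
  if xp ≤ y ∧ y ≤ x then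
    (Complex.I / (h:ℂ)) * Complex.exp (-(Complex.I / (h:ℂ)) * ∫ t in y..x, gt t)
  else if x ≤ y ∧ y ≤ xp then
    -(Complex.I / (h:ℂ)) * Complex.exp (-(Complex.I / (h:ℂ)) * ∫ t in y..x, gt t)
  else 0

open Set intervalIntegral

lemma norm_I_div_mul_exp {h : ℝ} (hh : 0 < h) (J : ℂ) :
    ‖(I / h) * exp (-(I / h) * J)‖ = Real.exp (J.im / h) / h := by
  rw [norm_mul, norm_exp, norm_div, norm_I, norm_real, Real.norm_of_nonneg hh.le]
  have : (-(I / h) * J).re = J.im / h := by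
    rw [show -(I / h) * J = -I * J / h by ring, div_ofReal_re]; simp
  rw [this, one_div_mul_eq_div]

lemma norm_kker_le {xp h B x y : ℝ} (hh : 0 < h) {g : ℝ → ℂ}
    (hB : (xp ≤ y ∧ y ≤ x) ∨ (x ≤ y ∧ y ≤ xp) → (∫ t in y..x, g t).im ≤ B) :
    ‖kker xp h g x y‖ ≤ Real.exp (B / h) / h := by
  unfold kker
  split_ifs with h₁ h₂
  · rw [norm_I_div_mul_exp hh]; gcongr; exact hB (.inl h₁)
  · rw [neg_mul, norm_neg, norm_I_div_mul_exp hh]; gcongr; exact hB (.inr h₂)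
  · rw [norm_zero]; positivity

lemma integral_sub_div_eq (E D L : ℝ) :
    ∫ t in (0:ℝ)..L, (E - t / D) = E * L - L ^ 2 / (2 * D) := by
  rw [intervalIntegral.integral_sub intervalIntegrable_const (intervalIntegrable_id.div_const D),
    intervalIntegral.integral_const, intervalIntegral.integral_div, integral_id, smul_eq_mul]
  ring

lemma integral_le_of_le_sub_div_left {f : ℝ → ℝ} {a b D E : ℝ} (hab : a ≤ b)
    (hf : IntervalIntegrable f volume a b) (hle : ∀ t ∈ Icc a b, f t ≤ E - (t - a) / D) :
    ∫ t in a..b, f t ≤ E * (b - a) - (b - a) ^ 2 / (2 * D) := calc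
  ∫ t in a..b, f t ≤ ∫ t in a..b, (E - (t - a) / D) :=
    integral_mono_on hab hf (Continuous.intervalIntegrable (by fun_prop) _ _) hle
  _ = E * (b - a) - (b - a) ^ 2 / (2 * D) := by
    rw [integral_comp_sub_right (fun t => E - t / D), sub_self, integral_sub_div_eq]

lemma integral_le_of_le_sub_div_right {f : ℝ → ℝ} {a b D E : ℝ} (hab : a ≤ b)
    (hf : IntervalIntegrable f volume a b) (hle : ∀ t ∈ Icc a b, f t ≤ E - (b - t) / D) :
    ∫ t in a..b, f t ≤ E * (b - a) - (b - a) ^ 2 / (2 * D) := calc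
  ∫ t in a..b, f t ≤ ∫ t in a..b, (E - (b - t) / D) :=
    integral_mono_on hab hf (Continuous.intervalIntegrable (by fun_prop) _ _) hle
  _ = E * (b - a) - (b - a) ^ 2 / (2 * D) := by
    rw [integral_comp_sub_left (fun t => E - t / D), sub_self, integral_sub_div_eq]

lemma im_intervalIntegral {g : ℝ → ℂ} (hg : Continuous g) (a b : ℝ) :
    (∫ t in a..b, g t).im = ∫ t in a..b, (g t).im :=
  (intervalIntegral_im (hg.intervalIntegrable a b)).symm

lemma im_integral_le_of_im_le {g : ℝ → ℂ} (hg : Continuous g) {xp D E x y : ℝ} (hD : 0 < D)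
    (hupper : ∀ t, xp ≤ t → (g t).im ≤ -(t - xp) / D + E) (hy : xp ≤ y) (hyx : y ≤ x) :
    (∫ t in y..x, g t).im ≤ E * (x - y) - (x - y) ^ 2 / (2 * D) := by
  rw [im_intervalIntegral hg]
  refine integral_le_of_le_sub_div_left hyx (Continuous.intervalIntegrable (by fun_prop) _ _)
    fun t ht => ?_
  have hle := hupper t (hy.trans ht.1)
  have : (t - y) / D ≤ (t - xp) / D := by gcongr
  rw [neg_div] at hle
  linarith

lemma im_integral_le_of_le_im {g : ℝ → ℂ} (hg : Continuous g) {xp D E x y : ℝ} (hD : 0 < D)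
    (hlower : ∀ t, t ≤ xp → -(t - xp) / D - E ≤ (g t).im) (hxy : x ≤ y) (hy : y ≤ xp) :
    (∫ t in y..x, g t).im ≤ E * (y - x) - (y - x) ^ 2 / (2 * D) := by
  rw [im_intervalIntegral hg, integral_symm, ← intervalIntegral.integral_neg]
  refine integral_le_of_le_sub_div_right hxy (Continuous.intervalIntegrable (by fun_prop) _ _)
    fun t ht => ?_
  have : (y - t) / D ≤ -(t - xp) / D := by gcongr; linarith [ht.2]
  linarith [hlower t (ht.2.trans hy)]

lemma mul_sq_mul_sub_sq_div_le {D K C d h : ℝ} (hD : 0 < D) (hK : D * (D + 1) ^ 2 / 2 ≤ K)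
    (hC : 1 ≤ C) (hd : 0 ≤ d) (hh : 0 < h) (hh₁ : h ≤ 1) :
    D * h ^ 2 * d - d ^ 2 / (2 * D) ≤ h * (K - d / (C * √h)) := by
  obtain ⟨s, hs, hs₁, rfl⟩ : ∃ s, 0 < s ∧ s ≤ 1 ∧ h = s ^ 2 :=
    ⟨√h, by positivity, Real.sqrt_le_one.2 hh₁, (Real.sq_sqrt hh.le).symm⟩
  rw [Real.sqrt_sq hs.le]
  have hA : D ^ 2 * s ^ 4 + D * s ≤ D * (D + 1) * s := by
    have : s ^ 4 ≤ s := pow_le_of_le_one hs.le hs₁ (by norm_num)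
    nlinarith
  -- `(d - A)² ≥ 0` with `A = D²s⁴ + Ds`
  have hquad : 2 * (D ^ 2 * s ^ 4 + D * s) * d - d ^ 2 ≤ (D * (D + 1) * s) ^ 2 := by
    nlinarith [sq_nonneg (d - (D ^ 2 * s ^ 4 + D * s)),
      mul_le_mul hA hA (by positivity) (by positivity)]
  calc D * (s ^ 2) ^ 2 * d - d ^ 2 / (2 * D)
      = (2 * (D ^ 2 * s ^ 4 + D * s) * d - d ^ 2) / (2 * D) - s * d := by field_simp; ring
    _ ≤ (D * (D + 1) * s) ^ 2 / (2 * D) - s * d := by gcongr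
    _ = s ^ 2 * (D * (D + 1) ^ 2 / 2) - s * d := by field_simp
    _ ≤ s ^ 2 * K - s * d / C := by gcongr; exact div_le_self (by positivity) hC
    _ = s ^ 2 * (K - d / (C * s)) := by field_simp

/-- Pointwise exponential bound `|k(x,y)| ≤ (C/h) exp(−|x−y|/(C√h))` on the kernel of the
forward solution operator of the model equation. -/
theorem stmt_2
    (xp : ℝ) (C₀ C₁ : ℝ) (hC₀ : 0 < C₀) (hC₁ : 0 < C₁)
    (gt : ℝ → ℝ → ℂ)
    (hcont : ∀ h ∈ Set.Ioc (0:ℝ) 1, Continuous (gt h))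
    (hupper : ∀ h ∈ Set.Ioc (0:ℝ) 1, ∀ x : ℝ, xp ≤ x →
      (gt h x).im ≤ -(x - xp) / C₀ + C₀ * h ^ 2)
    (hlower : ∀ h ∈ Set.Ioc (0:ℝ) 1, ∀ x : ℝ, x ≤ xp →
      -(x - xp) / C₁ - C₁ * h ^ 2 ≤ (gt h x).im) :
    ∃ C h₀ : ℝ, 0 < C ∧ 0 < h₀ ∧ h₀ ≤ 1 ∧ ∀ h ∈ Set.Ioo (0:ℝ) h₀, ∀ x y : ℝ,
      ‖kker xp h (gt h) x y‖ ≤ (C / h) * Real.exp (-|x - y| / (C * Real.sqrt h)) := by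
  set K := C₀ * (C₀ + 1) ^ 2 / 2 + C₁ * (C₁ + 1) ^ 2 / 2
  have hC : 1 ≤ Real.exp K := Real.one_le_exp (by positivity)
  refine ⟨Real.exp K, 1, Real.exp_pos K, one_pos, le_rfl, fun h hh x y => ?_⟩
  have hh' : h ∈ Ioc 0 1 := Ioo_subset_Ioc_self hh
  calc ‖kker xp h (gt h) x y‖
      ≤ Real.exp (h * (K - |x - y| / (Real.exp K * √h)) / h) / h := norm_kker_le hh.1 ?_
    _ = Real.exp K / h * Real.exp (-|x - y| / (Real.exp K * √h)) := by
      rw [mul_div_cancel_left₀ _ hh.1.ne', sub_eq_add_neg, Real.exp_add, neg_div]; ring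
  rintro (⟨hy, hyx⟩ | ⟨hxy, hy⟩)
  · rw [abs_of_nonneg (sub_nonneg.2 hyx)]
    refine (im_integral_le_of_im_le (hcont h hh') hC₀ (hupper h hh') hy hyx).trans ?_
    exact mul_sq_mul_sub_sq_div_le hC₀ (le_add_of_nonneg_right (by positivity)) hC
      (sub_nonneg.2 hyx) hh.1 hh'.2
  · rw [abs_sub_comm, abs_of_nonneg (sub_nonneg.2 hxy)]
    refine (im_integral_le_of_le_im (hcont h hh') hC₁ (hlower h hh') hxy hy).trans ?_
    exact mul_sq_mul_sub_sq_div_le hC₁ (le_add_of_nonneg_left (by positivity)) hC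
      (sub_nonneg.2 hxy) hh.1 hh'.2
end

section
/- As y → 0⁺, Im ∫_{−√y}^{√y} (1 + i y − i x²)^{1/2} dx = (2/3)·y^{3/2} + O(y^{5/2}); that is, there exist C > 0 and y₀ > 0 such that for all y ∈ (0, y₀): |Im ∫_{−√y}^{√y} (1 + i y − i x²)^{1/2} dx − (2/3)·y^{3/2}| ≤ C·y^{5/2}. -/
open Complex

lemma sqrt_half_im (t : ℝ) (ht0 : 0 ≤ t) (ht1 : t ≤ 1) :
    |((1 + Complex.I * (t:ℂ)) ^ ((1:ℂ)/2)).im - t/2| ≤ t^2 := by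
  set r := Real.sqrt (1 + t^2) with hrdef
  have hr2 : r^2 = 1 + t^2 := Real.sq_sqrt (by positivity)
  have hrnn : 0 ≤ r := Real.sqrt_nonneg _
  have hr1 : 1 ≤ r := by nlinarith
  set d := Real.sqrt (2*(r+1)) with hddef
  have hd2 : d^2 = 2*(r+1) := Real.sq_sqrt (by nlinarith)
  have hdnn : 0 ≤ d := Real.sqrt_nonneg _
  have hdge : 2 ≤ d := by nlinarith
  have hdpos : 0 < d := by linarith
  have hz : (1 + Complex.I * (t:ℂ)) ≠ 0 := by
    intro h
    have := congrArg Complex.re h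
    simp at this
  set w := (1 + Complex.I * (t:ℂ)) ^ ((1:ℂ)/2) with hwdef
  have hw2 : w^2 = 1 + Complex.I * (t:ℂ) := by
    rw [hwdef, sq, ← Complex.cpow_add _ _ hz]
    norm_num
  -- real part of w is positive
  have hwre : 0 < w.re := by
    rw [hwdef, Complex.cpow_def_of_ne_zero hz]
    rw [Complex.exp_re]
    have him : (Complex.log (1 + Complex.I * (t:ℂ)) * ((1:ℂ)/2)).im
        = Complex.arg (1 + Complex.I * (t:ℂ)) / 2 := by
      rw [Complex.mul_im]
      simp [Complex.log_im]
      ring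
    rw [him]
    have harg : |Complex.arg (1 + Complex.I * (t:ℂ))| ≤ Real.pi / 2 := by
      rw [Complex.abs_arg_le_pi_div_two_iff]
      simp
    have hpi : 0 < Real.pi := Real.pi_pos
    have hcos : 0 < Real.cos (Complex.arg (1 + Complex.I * (t:ℂ)) / 2) := by
      apply Real.cos_pos_of_mem_Ioo
      constructor
      · rw [abs_le] at harg; linarith [harg.1]
      · rw [abs_le] at harg; linarith [harg.2]
    positivity
  -- the candidate square root
  set c : ℂ := ⟨d/2, t/d⟩ with hcdef
  have hc2 : c^2 = 1 + Complex.I * (t:ℂ) := by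
    rw [sq]
    apply Complex.ext
    · simp [hcdef, Complex.mul_re]
      field_simp
      nlinarith
    · simp [hcdef, Complex.mul_im]
      field_simp
      ring
  have hwc : w = c ∨ w = -c := by
    have h0 : (w - c) * (w + c) = 0 := by
      have : w^2 - c^2 = 0 := by rw [hw2, hc2]; ring
      linear_combination this
    rcases mul_eq_zero.mp h0 with h | h
    · left; exact sub_eq_zero.mp h
    · right; exact eq_neg_of_add_eq_zero_left h
  have hwim : w.im = t/d := by
    rcases hwc with h | h
    · rw [h]
    · exfalso
      have : w.re = -(d/2) := by rw [h]; simp [hcdef]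
      rw [this] at hwre; linarith
  rw [hwim]
  have hkey : d - 2 ≤ t^2 := by nlinarith
  have heq : t/d - t/2 = -(t*(d-2)/(2*d)) := by field_simp; ring
  have hnn : (0:ℝ) ≤ t * (d - 2) / (2 * d) := by
    have h2 : (0:ℝ) ≤ d - 2 := by linarith
    positivity
  rw [heq, abs_neg, _root_.abs_of_nonneg hnn]
  rw [div_le_iff₀ (by positivity)]
  nlinarith

/-- Asymptotics of the imaginary part of the action integral for the non-self-adjoint
harmonic oscillator: `Im ∫_{−√y}^{√y} (1 + iy − ix²)^{1/2} dx = (2/3)y^{3/2} + O(y^{5/2})`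
as `y → 0⁺` (principal branch of the square root). -/
theorem stmt_14 :
    ∃ C y₀ : ℝ, 0 < C ∧ 0 < y₀ ∧ ∀ y ∈ Set.Ioo (0:ℝ) y₀,
      |(∫ x in -Real.sqrt y..Real.sqrt y,
          ((1:ℂ) + Complex.I * (y:ℂ) - Complex.I * (x:ℂ) ^ 2) ^ ((1:ℂ)/2)).im
        - (2/3) * y ^ ((3:ℝ)/2)| ≤ C * y ^ ((5:ℝ)/2) := by
  refine ⟨2, 1, by norm_num, one_pos, ?_⟩
  rintro y ⟨hy0, hy1⟩
  set s := Real.sqrt y with hsdef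
  have hs0 : 0 < s := Real.sqrt_pos.mpr hy0
  have hs2 : s^2 = y := Real.sq_sqrt hy0.le
  set f : ℝ → ℂ := fun x => ((1:ℂ) + Complex.I*(y:ℂ) - Complex.I*(x:ℂ)^2) ^ ((1:ℂ)/2)
    with hfdef
  have hcont : Continuous f := by
    apply Continuous.cpow _ continuous_const
    · intro x
      rw [Complex.mem_slitPlane_iff]
      left
      simp [← Complex.ofReal_pow]
    · fun_prop
  have hint : IntervalIntegrable f MeasureTheory.volume (-s) s :=
    hcont.intervalIntegrable _ _
  have hint_im : IntervalIntegrable (fun x => (f x).im) MeasureTheory.volume (-s) s :=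
    (Complex.continuous_im.comp hcont).intervalIntegrable _ _
  have hint_g : IntervalIntegrable (fun x : ℝ => (y - x^2)/2) MeasureTheory.volume (-s) s := by
    apply Continuous.intervalIntegrable
    fun_prop
  have him : (∫ x in -s..s, f x).im = ∫ x in -s..s, (f x).im := by
    have := Complex.imCLM.intervalIntegral_comp_comm hint
    simpa using this.symm
  have hg : (∫ x in (-s)..s, (y - x^2)/2) = (2/3) * s^3 := by
    have h1 : (∫ x in (-s)..s, (y - x^2)/2)
        = (∫ x in (-s)..s, (y - x^2))/2 := intervalIntegral.integral_div 2 _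
    have h2 : (∫ x in (-s)..s, (y - x^2))
        = (∫ x in (-s)..s, (y:ℝ)) - ∫ x in (-s)..s, x^2 := by
      apply intervalIntegral.integral_sub intervalIntegrable_const
      exact (continuous_pow 2).intervalIntegrable _ _
    rw [h1, h2, intervalIntegral.integral_const, integral_pow, smul_eq_mul, ← hs2]
    ring
  have hpt : ∀ x ∈ Set.uIoc (-s) s, |(f x).im - (y - x^2)/2| ≤ y^2 := by
    intro x hx
    rw [Set.uIoc_of_le (by linarith)] at hx
    have hx2 : x^2 ≤ y := by
      have := sq_le_sq' hx.1.le hx.2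
      rwa [hs2] at this
    have ht0 : 0 ≤ y - x^2 := by linarith
    have ht1 : y - x^2 ≤ 1 := by nlinarith
    have hbase : (1:ℂ) + Complex.I*(y:ℂ) - Complex.I*(x:ℂ)^2
        = 1 + Complex.I*((y - x^2 : ℝ):ℂ) := by push_cast; ring
    calc |(f x).im - (y - x^2)/2|
        = |((1 + Complex.I*((y - x^2 : ℝ):ℂ)) ^ ((1:ℂ)/2)).im - (y - x^2)/2| := by
          rw [hfdef]; simp only; rw [hbase]
      _ ≤ (y - x^2)^2 := sqrt_half_im _ ht0 ht1
      _ ≤ y^2 := by nlinarith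
  have hsub : (∫ x in -s..s, (f x).im) - (2/3)*s^3
      = ∫ x in -s..s, ((f x).im - (y - x^2)/2) := by
    rw [intervalIntegral.integral_sub hint_im hint_g, hg]
  have hbound : |∫ x in -s..s, ((f x).im - (y - x^2)/2)| ≤ y^2 * |s - -s| := by
    rw [← Real.norm_eq_abs]
    apply intervalIntegral.norm_integral_le_of_norm_le_const
    intro x hx
    rw [Real.norm_eq_abs]
    exact hpt x hx
  have h32 : y ^ ((3:ℝ)/2) = s^3 := by
    rw [hsdef, Real.sqrt_eq_rpow, ← Real.rpow_natCast (y ^ ((1:ℝ)/2)) 3,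
      ← Real.rpow_mul hy0.le]
    norm_num
  have h52 : y ^ ((5:ℝ)/2) = y^2 * s := by
    rw [hsdef, Real.sqrt_eq_rpow, show ((5:ℝ)/2) = 2 + 1/2 by norm_num,
      Real.rpow_add hy0, Real.rpow_two]
  rw [him, h32, hsub, h52]
  have habs : |s - -s| = 2*s := by
    rw [_root_.abs_of_nonneg (by linarith)]; ring
  rw [habs] at hbound
  nlinarith [hbound]
end

section
/- As y → 0⁺, Im ∫_{−√y}^{√y} (1 − i y + i x²)^{1/3} dx = −(4/9)·y^{3/2} + O(y^{5/2}); that is, there exist C > 0 and y₀ > 0 such that for all y ∈ (0, y₀): |Im ∫_{−√y}^{√y} (1 − i y + i x²)^{1/3} dx + (4/9)·y^{3/2}| ≤ C·y^{5/2}. -/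
open Complex intervalIntegral

/-!
On the interval of integration the base is `1 + i w` with `w = x² - y ∈ [-y, 0]`. Two applications
of the mean value inequality to `t ↦ (1 + i t)^c` (whose derivatives are bounded because
`‖1 + i t‖ ≥ 1`) give `(1 + i w)^c = 1 + c i w + O(w²)`, so the imaginary part of the integrand is
`c (x² - y) + O(y²)`. The polynomial part integrates to `-(4/3) c y^{3/2}`, and the remainder over
an interval of length `2√y` is `O(y^{5/2})`.
-/

section OneAddIMul

variable (t : ℝ)

lemma one_add_I_mul_mem_slitPlane : 1 + I * t ∈ slitPlane := by
  simp [mem_slitPlane_iff]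

lemma one_le_norm_one_add_I_mul : 1 ≤ ‖1 + I * t‖ := by
  simpa using abs_re_le_norm (1 + I * t)

lemma hasDerivAt_one_add_I_mul_cpow (c : ℂ) :
    HasDerivAt (fun t : ℝ => (1 + I * t) ^ c) (c * (1 + I * t) ^ (c - 1) * I) t := by
  have hbase : HasDerivAt (fun t : ℝ => 1 + I * t) I t := by
    simpa using ((ofRealCLM.hasDerivAt (x := t)).const_mul I).const_add 1
  exact (hasStrictDerivAt_cpow_const (one_add_I_mul_mem_slitPlane t)).hasDerivAt.comp t hbase

lemma norm_one_add_I_mul_cpow_le_one {c : ℝ} (hc : c ≤ 0) : ‖(1 + I * t) ^ (c : ℂ)‖ ≤ 1 := by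
  rw [norm_cpow_real]
  exact Real.rpow_le_one_of_one_le_of_nonpos (one_le_norm_one_add_I_mul t) hc

lemma norm_one_add_I_mul_cpow_sub_one_le {c : ℝ} (hc : c ≤ 1) :
    ‖(1 + I * t) ^ (c : ℂ) - 1‖ ≤ |c| * |t| := by
  have hderiv : ∀ s : ℝ, ‖(c : ℂ) * (1 + I * s) ^ ((c : ℂ) - 1) * I‖ ≤ |c| := fun s => by
    rw [show (c : ℂ) - 1 = ((c - 1 : ℝ) : ℂ) by push_cast; ring, norm_mul, norm_mul, norm_I,
      mul_one, norm_real, Real.norm_eq_abs]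
    exact mul_le_of_le_one_right (abs_nonneg c)
      (norm_one_add_I_mul_cpow_le_one s (by linarith))
  simpa using convex_univ.norm_image_sub_le_of_norm_hasDerivWithin_le
    (fun s _ => (hasDerivAt_one_add_I_mul_cpow s c).hasDerivWithinAt) (fun s _ => hderiv s)
    (Set.mem_univ 0) (Set.mem_univ t)

lemma norm_one_add_I_mul_cpow_sub_one_sub_le {c : ℝ} (hc : c ≤ 2) :
    ‖(1 + I * t) ^ (c : ℂ) - 1 - c * I * t‖ ≤ |c| * |c - 1| * t ^ 2 := by
  have hderiv : ∀ s : ℝ, HasDerivAt (fun s : ℝ => (1 + I * s) ^ (c : ℂ) - 1 - c * I * s)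
      (c * I * ((1 + I * s) ^ ((c - 1 : ℝ) : ℂ) - 1)) s := fun s => by
    have hlin : HasDerivAt (fun s : ℝ => (c : ℂ) * I * s) (c * I) s := by
      simpa using (ofRealCLM.hasDerivAt (x := s)).const_mul ((c : ℂ) * I)
    exact (((hasDerivAt_one_add_I_mul_cpow s c).sub_const 1).sub hlin).congr_deriv
      (by push_cast; ring)
  have hbound : ∀ s ∈ Set.uIcc 0 t,
      ‖(c : ℂ) * I * ((1 + I * s) ^ ((c - 1 : ℝ) : ℂ) - 1)‖ ≤ |c| * |c - 1| * |t| := by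
    intro s hs
    rw [norm_mul, norm_mul, norm_I, mul_one, norm_real, Real.norm_eq_abs, mul_assoc]
    gcongr
    calc _ ≤ |c - 1| * |s| := norm_one_add_I_mul_cpow_sub_one_le s (by linarith)
      _ ≤ |c - 1| * |t| :=
        mul_le_mul_of_nonneg_left (by simpa using Set.abs_sub_left_of_mem_uIcc hs) (abs_nonneg _)
  have := convex_uIcc 0 t |>.norm_image_sub_le_of_norm_hasDerivWithin_le
    (fun s _ => (hderiv s).hasDerivWithinAt) hbound Set.left_mem_uIcc Set.right_mem_uIcc
  simpa [mul_assoc, ← sq] using this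

lemma abs_im_one_add_I_mul_cpow_sub_le {c : ℝ} (hc : c ≤ 2) :
    |((1 + I * t) ^ (c : ℂ)).im - c * t| ≤ |c| * |c - 1| * t ^ 2 := by
  have him : ((1 + I * t) ^ (c : ℂ) - 1 - c * I * t).im = ((1 + I * t) ^ (c : ℂ)).im - c * t := by
    simp
  rw [← him]
  exact (abs_im_le_norm _).trans (norm_one_add_I_mul_cpow_sub_one_sub_le t hc)

end OneAddIMul

lemma integral_sq_sub_sq_symm (s : ℝ) : ∫ x in -s..s, (x ^ 2 - s ^ 2) = -(4 / 3) * s ^ 3 := by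
  rw [integral_sub (intervalIntegrable_pow 2) intervalIntegrable_const,
    integral_pow, integral_const, smul_eq_mul]
  ring

theorem abs_im_integral_one_add_I_mul_cpow_sub_le {c M a b : ℝ} {w : ℝ → ℝ} (hc : c ≤ 2)
    (hw : Continuous w) (hM : ∀ x ∈ Set.uIoc a b, |w x| ≤ M) :
    |(∫ x in a..b, (1 + I * (w x : ℂ)) ^ (c : ℂ)).im - c * ∫ x in a..b, w x|
      ≤ |c| * |c - 1| * M ^ 2 * |b - a| := by
  have hcont : Continuous fun x => (1 + I * (w x : ℂ)) ^ (c : ℂ) :=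
    Continuous.cpow (by fun_prop) continuous_const fun x => one_add_I_mul_mem_slitPlane _
  have him : (∫ x in a..b, (1 + I * (w x : ℂ)) ^ (c : ℂ)).im
      = ∫ x in a..b, ((1 + I * (w x : ℂ)) ^ (c : ℂ)).im := by
    simpa using
      (intervalIntegral_im (hcont.intervalIntegrable (μ := MeasureTheory.volume) a b)).symm
  have himint : IntervalIntegrable (fun x => ((1 + I * (w x : ℂ)) ^ (c : ℂ)).im)
      MeasureTheory.volume a b := (continuous_im.comp hcont).intervalIntegrable _ _
  have hpoint : ∀ x ∈ Set.uIoc a b,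
      ‖((1 + I * (w x : ℂ)) ^ (c : ℂ)).im - c * w x‖ ≤ |c| * |c - 1| * M ^ 2 := by
    intro x hx
    refine (abs_im_one_add_I_mul_cpow_sub_le (w x) hc).trans ?_
    rw [← sq_abs (w x)]
    gcongr
    exact hM x hx
  rw [him, ← integral_const_mul, ← integral_sub himint (hw.intervalIntegrable a b |>.const_mul c)]
  exact norm_integral_le_of_norm_le_const hpoint

/-- Asymptotics of the imaginary part of the action integral for the cubic non-self-adjoint
operator: `Im ∫_{−√y}^{√y} (1 − iy + ix²)^{1/3} dx = −(4/9)y^{3/2} + O(y^{5/2})`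
as `y → 0⁺` (principal branch of the cube root). -/
theorem stmt_15 :
    ∃ C y₀ : ℝ, 0 < C ∧ 0 < y₀ ∧ ∀ y ∈ Set.Ioo (0:ℝ) y₀,
      |(∫ x in -Real.sqrt y..Real.sqrt y,
          ((1:ℂ) - Complex.I * (y:ℂ) + Complex.I * (x:ℂ) ^ 2) ^ ((1:ℂ)/3)).im
        + (4/9) * y ^ ((3:ℝ)/2)| ≤ C * y ^ ((5:ℝ)/2) := by
  refine ⟨4 / 9, 1, by norm_num, one_pos, fun y hy => ?_⟩
  have hbase : ∀ x : ℝ, (1 : ℂ) - I * y + I * (x : ℂ) ^ 2 = 1 + I * ((x ^ 2 - y : ℝ) : ℂ) :=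
    fun x => by push_cast; ring
  simp only [hbase, Real.rpow_div_two_eq_sqrt _ hy.1.le]
  set s := √y
  have hs : 0 ≤ s := Real.sqrt_nonneg y
  have hsy : s ^ 2 = y := Real.sq_sqrt hy.1.le
  have hbound : ∀ x ∈ Set.uIoc (-s) s, |x ^ 2 - y| ≤ y := fun x hx => by
    rw [Set.uIoc_of_le (by linarith), Set.mem_Ioc] at hx
    rw [abs_le]
    constructor <;> nlinarith
  have hpoly : ∫ x in -s..s, (x ^ 2 - y) = -(4 / 3) * s ^ 3 := by
    rw [← hsy]
    exact integral_sq_sub_sq_symm s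
  have hrem : |(1 / 3 : ℝ)| * |1 / 3 - 1| * y ^ 2 * |s - -s| = 4 / 9 * s ^ 5 := by
    rw [← hsy, show s - -s = 2 * s by ring, abs_of_nonneg (by positivity : 0 ≤ 2 * s)]
    norm_num
    ring
  have key := abs_im_integral_one_add_I_mul_cpow_sub_le (c := 1 / 3) (by norm_num)
    (by fun_prop) hbound
  rw [hpoly, hrem] at key
  norm_num at key ⊢
  convert key using 3
  ring
end

section
/- For every h ∈ (0, 1] the function e₊ belongs to L²(ℝ), and for every δ > 0 there exist c' > 0 and h₀ > 0 such that for all h ∈ (0, h₀): ∫_{|x − x₊| ≥ δ} |e₊(x)|² dx ≤ e^{−c'/h} · ∫_ℝ |e₊(x)|² dx. (This expresses that the quasimode e₊ concentrates exponentially at x₊; in particular, for any cutoff χ₊ equal to 1 near x₊, the Grushin-problem quantity D₊ = ⟨e₊, χ₊e₊⟩/‖e₊‖² equals 1 + O(e^{−1/(Ch)}).) -/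
/-!
With `Φ x = ∫_{x₊}^x Im g` one has `|e₊|² = exp (2Φ/h)`. The sign and lower-bound conditions on
`Im g` give `Φ x ≤ -c d (|x - x₊| - d)` for every `d ∈ [0, 1]`, so on `|x - x₊| ≥ 2d` the weight
`exp (2Φ/h)` is at most `exp (-2cd²/h)` times a fixed integrable exponential. Near `x₊` the upper
bound on `Im g` gives `Φ x ≥ -C |x - x₊|`, hence a total mass of at least `2h e^{-2C}`, and the
resulting loss of a factor `1/h` is absorbed by half of the exponential gain.
-/

open Complex MeasureTheory

open Set intervalIntegral

theorem integrable_exp_neg_mul_abs_sub {b : ℝ} (hb : 0 < b) (a : ℝ) :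
    Integrable fun x : ℝ => Real.exp (-(b * |x - a|)) := by
  refine Integrable.comp_sub_right (f := fun x => Real.exp (-(b * |x|)))
    (.of_integral_ne_zero ?_) a
  have h := integral_exp_mul_Ioi (neg_neg_of_pos hb) 0
  simp only [neg_mul] at h
  rw [integral_comp_abs (f := fun y => Real.exp (-(b * y))), h]
  simp [hb.ne']

theorem integrable_exp_of_le_sub_mul_abs_sub {φ : ℝ → ℝ} {a b k : ℝ} (hφ : Continuous φ)
    (hb : 0 < b) (hle : ∀ x, φ x ≤ k - b * |x - a|) : Integrable fun x => Real.exp (φ x) := by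
  refine ((integrable_exp_neg_mul_abs_sub hb a).const_mul (Real.exp k)).mono'
    (by fun_prop) (ae_of_all _ fun x => ?_)
  rw [Real.norm_of_nonneg (Real.exp_pos _).le, ← Real.exp_add, Real.exp_le_exp]
  linarith [hle x]

section Primitive

variable {f : ℝ → ℝ} {a c d x : ℝ}

theorem intervalIntegral_le_of_le_neg_min (hf : Continuous f) (hc : 0 ≤ c)
    (hR : ∀ t, a < t → f t ≤ -(c * min (t - a) 1)) (hd : 0 ≤ d) (hd1 : d ≤ 1) (hx : a ≤ x) :
    ∫ t in a..x, f t ≤ -(c * d * (x - a - d)) := by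
  set s := min x (a + d)
  have has : a ≤ s := le_min hx (by linarith)
  have hsx : s ≤ x := min_le_left _ _
  have hnear : ∫ t in a..s, f t ≤ 0 := by
    simpa using integral_mono_on_of_le_Ioo has (hf.intervalIntegrable _ _)
      (intervalIntegrable_const (μ := volume) (c := (0 : ℝ)))
      fun t ht => (hR t ht.1).trans
        (neg_nonpos.2 (mul_nonneg hc (le_min (by linarith [ht.1]) zero_le_one)))
  have hfar : ∫ t in s..x, f t ≤ -(c * d) * (x - s) := by
    have := integral_mono_on_of_le_Ioo hsx (hf.intervalIntegrable _ _)
      (intervalIntegrable_const (μ := volume) (c := -(c * d))) fun t ht => by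
        have hdt : a + d < t := (min_lt_iff.1 ht.1).resolve_left (not_lt.2 ht.2.le)
        exact (hR t (by linarith)).trans
          (neg_le_neg (mul_le_mul_of_nonneg_left (le_min (by linarith) hd1) hc))
    simpa [mul_comm, mul_assoc] using this
  rw [← integral_add_adjacent_intervals (hf.intervalIntegrable a s) (hf.intervalIntegrable s x)]
  nlinarith [min_le_right x (a + d), mul_nonneg hc hd]

theorem intervalIntegral_le_of_min_le (hf : Continuous f) (hc : 0 ≤ c)
    (hL : ∀ t, t < a → c * min (a - t) 1 ≤ f t) (hd : 0 ≤ d) (hd1 : d ≤ 1) (hx : x ≤ a) :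
    ∫ t in a..x, f t ≤ -(c * d * (a - x - d)) := by
  have h := intervalIntegral_le_of_le_neg_min (f := fun s => -f (2 * a - s)) (x := 2 * a - x)
    (by fun_prop) hc (fun s hs => by
      have := hL (2 * a - s) (by linarith)
      rw [show a - (2 * a - s) = s - a by ring] at this
      linarith) hd hd1 (by linarith)
  rw [intervalIntegral.integral_neg, intervalIntegral.integral_comp_sub_left] at h
  rw [integral_symm]
  convert h using 2 <;> ring_nf

theorem intervalIntegral_le_neg_mul_abs_sub (hf : Continuous f) (hc : 0 ≤ c)
    (hL : ∀ t, t < a → c * min (a - t) 1 ≤ f t) (hR : ∀ t, a < t → f t ≤ -(c * min (t - a) 1))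
    (hd : 0 ≤ d) (hd1 : d ≤ 1) (x : ℝ) :
    ∫ t in a..x, f t ≤ -(c * d * (|x - a| - d)) := by
  rcases le_total a x with hx | hx
  · rw [abs_of_nonneg (sub_nonneg.2 hx)]
    exact intervalIntegral_le_of_le_neg_min hf hc hR hd hd1 hx
  · rw [abs_of_nonpos (sub_nonpos.2 hx), neg_sub]
    exact intervalIntegral_le_of_min_le hf hc hL hd hd1 hx

theorem abs_intervalIntegral_le_mul_abs_sub {M r : ℝ} (hM : ∀ t, |t - a| ≤ r → |f t| ≤ M)
    (hx : |x - a| ≤ r) : |∫ t in a..x, f t| ≤ M * |x - a| := by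
  have := norm_integral_le_of_norm_le_const (a := a) (b := x) (f := f) (C := M) fun t ht =>
    hM t ((abs_sub_left_of_mem_uIcc (uIoc_subset_uIcc ht)).trans hx)
  simpa only [Real.norm_eq_abs] using this

end Primitive

theorem norm_cexp_neg_I_div_mul_sq (h : ℝ) (w : ℂ) :
    ‖cexp (-(I / h) * w)‖ ^ 2 = Real.exp (2 / h * w.im) := by
  rw [Complex.norm_exp, ← Real.exp_nat_mul]
  congr 1
  simp [Complex.mul_re, Complex.div_ofReal_re, Complex.div_ofReal_im]
  ring

section Weight

variable {Φ : ℝ → ℝ} {a c d h : ℝ}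

theorem integrable_exp_two_div_mul (hΦ : Continuous Φ) (hc : 0 < c) (hd : 0 < d)
    (hle : ∀ x, Φ x ≤ -(c * d * (|x - a| - d))) (hh : 0 < h) :
    Integrable fun x => Real.exp (2 / h * Φ x) := by
  refine integrable_exp_of_le_sub_mul_abs_sub (a := a) (k := 2 * c * d ^ 2 / h)
    (b := 2 * c * d / h) (by fun_prop) (by positivity) fun x => ?_
  calc 2 / h * Φ x ≤ 2 / h * -(c * d * (|x - a| - d)) := by gcongr; exact hle x
    _ = _ := by ring

theorem setIntegral_exp_two_div_mul_le {δ : ℝ} (hΦ : Continuous Φ) (hc : 0 < c) (hd : 0 < d)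
    (hδ : 2 * d ≤ δ) (hle : ∀ x, Φ x ≤ -(c * d * (|x - a| - d))) (hh : 0 < h) (hh1 : h ≤ 1) :
    ∫ x in {x | δ ≤ |x - a|}, Real.exp (2 / h * Φ x) ≤
      Real.exp (-(2 * (c * d ^ 2)) / h) * ∫ x, Real.exp (-(2 * c * d * (|x - a| - 2 * d))) := by
  have hG : Integrable fun x => Real.exp (-(2 * c * d * (|x - a| - 2 * d))) :=
    integrable_exp_of_le_sub_mul_abs_sub (a := a) (k := 4 * c * d ^ 2) (b := 2 * c * d)
      (by fun_prop) (by positivity) fun x => le_of_eq (by ring)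
  have hS : MeasurableSet {x | δ ≤ |x - a|} := measurableSet_le measurable_const (by fun_prop)
  calc ∫ x in {x | δ ≤ |x - a|}, Real.exp (2 / h * Φ x)
      ≤ ∫ x in {x | δ ≤ |x - a|},
          Real.exp (-(2 * (c * d ^ 2)) / h) * Real.exp (-(2 * c * d * (|x - a| - 2 * d))) := by
        refine setIntegral_mono_on (integrable_exp_two_div_mul hΦ hc hd hle hh).integrableOn
          (hG.const_mul _).integrableOn hS fun x hx => ?_
        have hu : 0 ≤ |x - a| - 2 * d := by linarith [show δ ≤ |x - a| from hx]
        have hdecay : 2 * c * d * (|x - a| - 2 * d) ≤ 2 * c * d * (|x - a| - 2 * d) / h :=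
          le_div_self (by positivity) hh hh1
        rw [← Real.exp_add, Real.exp_le_exp]
        calc 2 / h * Φ x ≤ 2 / h * -(c * d * (|x - a| - d)) :=
              mul_le_mul_of_nonneg_left (hle x) (by positivity)
          _ = -(2 * (c * d ^ 2)) / h - 2 * c * d * (|x - a| - 2 * d) / h := by ring
          _ ≤ _ := by linarith
    _ = Real.exp (-(2 * (c * d ^ 2)) / h) *
          ∫ x in {x | δ ≤ |x - a|}, Real.exp (-(2 * c * d * (|x - a| - 2 * d))) :=
        integral_const_mul _ _
    _ ≤ _ := mul_le_mul_of_nonneg_left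
        (setIntegral_le_integral hG (ae_of_all _ fun _ => (Real.exp_pos _).le)) (Real.exp_pos _).le

theorem mul_exp_le_integral_exp_two_div_mul {M : ℝ} (hM : 0 ≤ M)
    (hge : ∀ x, |x - a| ≤ 1 → -(M * |x - a|) ≤ Φ x)
    (hF : Integrable fun x => Real.exp (2 / h * Φ x)) (hh : 0 < h) (hh1 : h ≤ 1) :
    2 * h * Real.exp (-(2 * M)) ≤ ∫ x, Real.exp (2 / h * Φ x) := by
  calc 2 * h * Real.exp (-(2 * M)) = ∫ _ in Icc (a - h) (a + h), Real.exp (-(2 * M)) := by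
        rw [setIntegral_const, measureReal_def, Real.volume_Icc,
          ENNReal.toReal_ofReal (by linarith), smul_eq_mul]
        ring
    _ ≤ ∫ x in Icc (a - h) (a + h), Real.exp (2 / h * Φ x) := by
        refine setIntegral_mono_on (integrableOn_const (by simp)) hF.integrableOn measurableSet_Icc
          fun x hx => Real.exp_le_exp.2 ?_
        have hxa : |x - a| ≤ h := abs_sub_le_iff.2 ⟨by linarith [hx.2], by linarith [hx.1]⟩
        calc -(2 * M) = 2 / h * -(M * h) := by field_simp
          _ ≤ 2 / h * -(M * |x - a|) := by gcongr
          _ ≤ 2 / h * Φ x := by gcongr; exact hge x (hxa.trans hh1)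
    _ ≤ ∫ x, Real.exp (2 / h * Φ x) :=
        setIntegral_le_integral hF (ae_of_all _ fun _ => (Real.exp_pos _).le)

end Weight

theorem mul_exp_neg_two_mul_div_le {A K L h : ℝ} (hA : 0 < A) (hK : 0 ≤ K) (hh : 0 < h)
    (hhK : h * K ≤ A ^ 2 * L) :
    Real.exp (-(2 * A) / h) * K ≤ Real.exp (-A / h) * (2 * h * L) := by
  have hquad : (A / h) ^ 2 / 2 ≤ Real.exp (A / h) := by
    have hAh : 0 ≤ A / h := by positivity
    linarith [Real.quadratic_le_exp_of_nonneg hAh]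
  have hexp : Real.exp (-A / h) ≤ 2 * h ^ 2 / A ^ 2 := by
    rw [neg_div, Real.exp_neg, inv_le_comm₀ (Real.exp_pos _) (by positivity), inv_div]
    exact (by ring : A ^ 2 / (2 * h ^ 2) = (A / h) ^ 2 / 2).trans_le hquad
  rw [show -(2 * A) / h = -A / h + -A / h by ring, Real.exp_add]
  calc Real.exp (-A / h) * Real.exp (-A / h) * K
      = K * Real.exp (-A / h) * Real.exp (-A / h) := by ring
    _ ≤ K * (2 * h ^ 2 / A ^ 2) * Real.exp (-A / h) := by gcongr
    _ = 2 * h * (h * K) / A ^ 2 * Real.exp (-A / h) := by ring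
    _ ≤ 2 * h * (A ^ 2 * L) / A ^ 2 * Real.exp (-A / h) := by gcongr
    _ = _ := by field_simp

/-- Exponential concentration of the quasimode `e₊(x) = exp(−(i/h)∫_{x₊}^x g)` at `x₊`:
`e₊ ∈ L²(ℝ)`, and for every `δ > 0` the `L²` mass of `e₊` outside `|x − x₊| < δ` is
an exponentially small (`≤ e^{−c'/h}`) fraction of its total `L²` mass. -/
theorem stmt_17
    (xp : ℝ) (c C : ℝ) (hc : 0 < c) (hC : 0 < C)
    (g : ℝ → ℂ) (hg : Continuous g)
    (h1 : ∀ x : ℝ, x < xp → 0 < (g x).im)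
    (h2 : ∀ x : ℝ, xp < x → (g x).im < 0)
    (h3 : ∀ x : ℝ, c * min |x - xp| 1 ≤ |(g x).im|)
    (h4 : ∀ x : ℝ, |x - xp| ≤ 1 → |(g x).im| ≤ C * |x - xp|) :
    (∀ h ∈ Set.Ioc (0:ℝ) 1,
      MemLp (fun x : ℝ => Complex.exp (-(Complex.I / (h:ℂ)) * ∫ t in xp..x, g t))
        2 volume) ∧
    ∀ δ : ℝ, 0 < δ → ∃ c' h₀ : ℝ, 0 < c' ∧ 0 < h₀ ∧ h₀ ≤ 1 ∧ ∀ h ∈ Set.Ioo (0:ℝ) h₀,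
      (∫ x in {x : ℝ | δ ≤ |x - xp|},
          ‖Complex.exp (-(Complex.I / (h:ℂ)) * ∫ t in xp..x, g t)‖ ^ 2)
        ≤ Real.exp (-c' / h) *
          ∫ x : ℝ, ‖Complex.exp (-(Complex.I / (h:ℂ)) * ∫ t in xp..x, g t)‖ ^ 2 := by
  have hf : Continuous fun t => (g t).im := continuous_im.comp hg
  have hL : ∀ t, t < xp → c * min (xp - t) 1 ≤ (g t).im := fun t ht => by
    simpa [abs_of_pos (h1 t ht), abs_of_neg (sub_neg.2 ht)] using h3 t
  have hR : ∀ t, xp < t → (g t).im ≤ -(c * min (t - xp) 1) := fun t ht => by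
    have := h3 t
    rw [abs_of_neg (h2 t ht), abs_of_pos (sub_pos.2 ht)] at this
    linarith
  set Φ := fun x => ∫ t in xp..x, (g t).im
  have hΦ : Continuous Φ := continuous_primitive (fun _ _ => hf.intervalIntegrable _ _) xp
  have hupper (d : ℝ) (hd : 0 ≤ d) (hd1 : d ≤ 1) (x : ℝ) : Φ x ≤ -(c * d * (|x - xp| - d)) :=
    intervalIntegral_le_neg_mul_abs_sub hf hc.le hL hR hd hd1 x
  have hlower (x : ℝ) (hx : |x - xp| ≤ 1) : -(C * |x - xp|) ≤ Φ x :=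
    neg_le_of_abs_le (abs_intervalIntegral_le_mul_abs_sub
      (fun t ht => (h4 t ht).trans (mul_le_of_le_one_right hC.le ht)) hx)
  have hint (h : ℝ) (hh : 0 < h) : Integrable fun x => Real.exp (2 / h * Φ x) :=
    integrable_exp_two_div_mul hΦ hc one_pos (hupper 1 zero_le_one le_rfl) hh
  have hsq (h x : ℝ) : ‖cexp (-(I / h) * ∫ t in xp..x, g t)‖ ^ 2 = Real.exp (2 / h * Φ x) := by
    rw [norm_cexp_neg_I_div_mul_sq]
    exact congrArg _ (congrArg _ (intervalIntegral_im (hg.intervalIntegrable _ _)).symm)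
  simp only [hsq]
  refine ⟨fun h hh => ?_, fun δ hδ => ?_⟩
  · rw [memLp_two_iff_integrable_sq_norm (by fun_prop)]
    simpa only [hsq] using hint h hh.1
  · obtain ⟨d, hd, hd1, hdδ⟩ : ∃ d : ℝ, 0 < d ∧ d ≤ 1 ∧ 2 * d ≤ δ :=
      ⟨min δ 1 / 2, by positivity, by linarith [min_le_right δ 1], by linarith [min_le_left δ 1]⟩
    set K := ∫ x, Real.exp (-(2 * c * d * (|x - xp| - 2 * d)))
    have hK : 0 ≤ K := integral_nonneg fun _ => (Real.exp_pos _).le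
    refine ⟨c * d ^ 2, min 1 ((c * d ^ 2) ^ 2 * Real.exp (-(2 * C)) / (K + 1)), by positivity,
      by positivity, min_le_left _ _, fun h ⟨hh, hh₀⟩ => ?_⟩
    have hh1 : h ≤ 1 := hh₀.le.trans (min_le_left _ _)
    have hhK : h * K ≤ (c * d ^ 2) ^ 2 * Real.exp (-(2 * C)) := by
      have := (lt_div_iff₀ (by positivity)).1 (hh₀.trans_le (min_le_right _ _))
      nlinarith
    calc _ ≤ Real.exp (-(2 * (c * d ^ 2)) / h) * K :=
          setIntegral_exp_two_div_mul_le hΦ hc hd hdδ (hupper d hd.le hd1) hh hh1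
      _ ≤ Real.exp (-(c * d ^ 2) / h) * (2 * h * Real.exp (-(2 * C))) :=
          mul_exp_neg_two_mul_div_le (by positivity) hK hh hhK
      _ ≤ _ := by
          gcongr
          exact mul_exp_le_integral_exp_two_div_mul hC.le hlower (hint h hh) hh hh1
end
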